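/- arXiv:2205.12025 — 5 statements merged into one kernel-verified Lean document; each statement's English description precedes it below -/
import Mathlib

section
/- Hardy–Littlewood-type lemma (key estimate of Lemma 5.1): Let n ≥ 2, L ≥ 1, 0 ≤ β < 1 and A ≥ 0. Let g : ℝ^{n−1} → ℝ be an L-Lipschitz function and let D = {x ∈ ℝⁿ : x_n > g(x₁,…,x_{n−1})} be its open epigraph, with boundary ∂D = {x ∈ ℝⁿ : x_n = g(x₁,…,x_{n−1})}. Suppose f : D → ℝ is twice continuously differentiable on D and satisfies ‖D²f(x)‖ ≤ A · dist(x, ∂D)^{β−1} for every x ∈ D. Then there exists a constant C, depending only on n, L and β, such that |f(x+h) + f(x−h) − 2f(x)| ≤ C · A · |h|^{1+β} for all x, h ∈ ℝⁿ with x, x+h, x−h ∈ D. -/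
/-!
Write `r = ‖h‖`, let `e` be the upward unit vector and `u(y) = yₙ - g(y')` the height above the
graph; `u` is `(1 + L)`-Lipschitz, so `dist(y, ∂D) ≥ u(y) / (1 + L)` and the hypothesis becomes
`‖D²f(y)‖ ≲ A u(y)^(β-1)`. At height `S = (L + 2) r` above `x` the whole ball of radius `r` lies at
height `≥ r`, where `‖D²f‖ ≲ A r^(β-1)`; the mean value theorem there bounds the second difference
`Δ_h f` by `A r^(1+β)` and `Δ_h ∂ₑf` by `A r^β`. Along the vertical segment,
`φ(t) = Δ_h f(x + t e)` satisfies `|φ''(t)| ≲ A t^(β-1)`, so `φ - t φ'` has derivative `-t φ''`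
of size `≲ A t^β`, which is integrable even for `β = 0`; comparing `φ(0)` with `φ(S) - S φ'(S)` gives the bound.
-/

open Metric

/-- The open epigraph `{x : xₙ > g(x₁,…,x_{n-1})}` of `g : ℝ^{n-1} → ℝ` (here `n = m+1`). -/
def epigraph (m : ℕ) (g : EuclideanSpace ℝ (Fin m) → ℝ) :
    Set (EuclideanSpace ℝ (Fin (m + 1))) :=
  {x | g (WithLp.toLp 2 (fun i : Fin m => x i.castSucc)) < x (Fin.last m)}

/-- The graph `{x : xₙ = g(x₁,…,x_{n-1})}` of `g`, i.e. the boundary of the epigraph. -/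
def graphSet (m : ℕ) (g : EuclideanSpace ℝ (Fin m) → ℝ) :
    Set (EuclideanSpace ℝ (Fin (m + 1))) :=
  {x | x (Fin.last m) = g (WithLp.toLp 2 (fun i : Fin m => x i.castSucc))}

open Set
open scoped NNReal

def secondDiff {E G : Type*} [AddCommGroup E] [AddCommGroup G] (φ : E → G) (z h : E) : G :=
  φ (z + h) + φ (z - h) - 2 • φ z

section SecondDifference

lemma norm_secondDiff_le {E F : Type*} [AddCommGroup E] [NormedAddCommGroup F] (φ : E → F)
    (z h : E) :
    ‖secondDiff φ z h‖ ≤ ‖φ (z + h) - φ z‖ + ‖φ (z - h) - φ z‖ := by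
  have : secondDiff φ z h = (φ (z + h) - φ z) + (φ (z - h) - φ z) := by
    rw [secondDiff, two_nsmul]; abel
  exact this ▸ norm_add_le _ _

lemma norm_secondDiff_le_of_forall_norm_le {E F : Type*} [AddCommGroup E] [NormedAddCommGroup F]
    {φ : E → F} {z h : E} {M : ℝ} (hadd : ‖φ (z + h)‖ ≤ M) (hsub : ‖φ (z - h)‖ ≤ M) (hz : ‖φ z‖ ≤ M) :
    ‖secondDiff φ z h‖ ≤ 4 * M := by
  have := norm_secondDiff_le φ z h
  linarith [norm_sub_le (φ (z + h)) (φ z), norm_sub_le (φ (z - h)) (φ z)]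

variable {E F : Type*} [NormedAddCommGroup E] [NormedSpace ℝ E] [NormedAddCommGroup F]
  [NormedSpace ℝ F]

lemma ContDiffAt.differentiableAt_fderiv {f : E → F} {z : E} (hf : ContDiffAt ℝ 2 f z) :
    DifferentiableAt ℝ (fderiv ℝ f) z :=
  (hf.fderiv_right (m := 1) (by norm_num)).differentiableAt one_ne_zero

lemma hasFDerivAt_secondDiff {φ : E → F} {z h : E} (hadd : DifferentiableAt ℝ φ (z + h))
    (hsub : DifferentiableAt ℝ φ (z - h)) (hz : DifferentiableAt ℝ φ z) :
    HasFDerivAt (secondDiff φ · h) (secondDiff (fderiv ℝ φ) z h) z :=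
  ((hadd.hasFDerivAt.comp z ((hasFDerivAt_id z).add_const h)).add
    (hsub.hasFDerivAt.comp z ((hasFDerivAt_id z).sub_const h))).sub
    (hz.hasFDerivAt.const_smul 2)

lemma hasDerivAt_secondDiff_comp_line {φ : E → F} {x e h : E} {t : ℝ}
    (hadd : DifferentiableAt ℝ φ (x + t • e + h)) (hsub : DifferentiableAt ℝ φ (x + t • e - h))
    (hz : DifferentiableAt ℝ φ (x + t • e)) :
    HasDerivAt (fun s : ℝ => secondDiff φ (x + s • e) h)
      (secondDiff (fderiv ℝ φ) (x + t • e) h e) t := by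
  have line : HasDerivAt (fun s : ℝ => x + s • e) e t := by
    simpa using ((hasDerivAt_id t).smul_const e).const_add x
  exact (hasFDerivAt_secondDiff hadd hsub hz).comp_hasDerivAt t line

section ConvexBound

variable {f : E → F} {s : Set E} {M : ℝ} {z h : E}

theorem norm_secondDiff_le_of_norm_fderiv_fderiv_le (hs : Convex ℝ s)
    (hf : ∀ w ∈ s, ContDiffAt ℝ 2 f w) (hM : ∀ w ∈ s, ‖fderiv ℝ (fderiv ℝ f) w‖ ≤ M)
    (hadd : z + h ∈ s) (hsub : z - h ∈ s) (hz : z ∈ s) :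
    ‖secondDiff f z h‖ ≤ M * ‖h‖ ^ 2 := by
  set T := s ∩ (· + h) ⁻¹' s
  have hT : Convex ℝ T := hs.inter (hs.translate_preimage_left h)
  have hderiv : ∀ w ∈ T, HasFDerivWithinAt (fun w => f (w + h) - f w)
      (fderiv ℝ f (w + h) - fderiv ℝ f w) T w := fun w hw =>
    (((hf _ hw.2).differentiableAt two_ne_zero).hasFDerivAt.comp w
      ((hasFDerivAt_id w).add_const h) |>.sub
      ((hf _ hw.1).differentiableAt two_ne_zero).hasFDerivAt).hasFDerivWithinAt
  have hbound : ∀ w ∈ T, ‖fderiv ℝ f (w + h) - fderiv ℝ f w‖ ≤ M * ‖h‖ := fun w hw => by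
    simpa using hs.norm_image_sub_le_of_norm_fderiv_le
      (fun v hv => (hf v hv).differentiableAt_fderiv) hM hw.1 hw.2
  have key := hT.norm_image_sub_le_of_norm_hasFDerivWithin_le hderiv hbound
    (x := z - h) (y := z) ⟨hsub, by simpa using hz⟩ ⟨hz, hadd⟩
  have : secondDiff f z h = f (z + h) - f z - (f (z - h + h) - f (z - h)) := by
    rw [secondDiff, sub_add_cancel, two_nsmul]; abel
  rw [this]
  simpa [sq, mul_assoc] using key

theorem norm_secondDiff_fderiv_le_of_norm_fderiv_fderiv_le (hs : Convex ℝ s)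
    (hf : ∀ w ∈ s, ContDiffAt ℝ 2 f w) (hM : ∀ w ∈ s, ‖fderiv ℝ (fderiv ℝ f) w‖ ≤ M)
    (hadd : z + h ∈ s) (hsub : z - h ∈ s) (hz : z ∈ s) :
    ‖secondDiff (fderiv ℝ f) z h‖ ≤ 2 * (M * ‖h‖) := by
  have hd : ∀ w ∈ s, DifferentiableAt ℝ (fderiv ℝ f) w := fun w hw =>
    (hf w hw).differentiableAt_fderiv
  have eadd := hs.norm_image_sub_le_of_norm_fderiv_le hd hM hz hadd
  have esub := hs.norm_image_sub_le_of_norm_fderiv_le hd hM hz hsub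
  simp only [add_sub_cancel_left, sub_sub_cancel_left, norm_neg] at eadd esub
  linarith [norm_secondDiff_le (fderiv ℝ f) z h]

end ConvexBound

end SecondDifference

theorem norm_image_zero_le_of_norm_deriv_deriv_le_rpow {F : Type*} [NormedAddCommGroup F]
    [NormedSpace ℝ F] {φ φ' φ'' : ℝ → F} {S K β : ℝ} (hS : 0 ≤ S) (hK : 0 ≤ K) (hβ : 0 ≤ β)
    (hφ : ∀ t ∈ Icc 0 S, HasDerivAt φ (φ' t) t) (hφ' : ∀ t ∈ Icc 0 S, HasDerivAt φ' (φ'' t) t)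
    (hφ'' : ∀ t ∈ Ioo 0 S, ‖φ'' t‖ ≤ K * t ^ (β - 1)) :
    ‖φ 0‖ ≤ ‖φ S‖ + S * ‖φ' S‖ + K * S ^ (β + 1) / (β + 1) := by
  set ψ : ℝ → F := fun t => φ t - t • φ' t - φ 0
  have hψ : ∀ t ∈ Icc 0 S, HasDerivAt ψ (-(t • φ'' t)) t := fun t ht =>
    (((hφ t ht).sub ((hasDerivAt_id t).smul (hφ' t ht))).sub_const (φ 0)).congr_deriv
      (by simp only [id, one_smul]; abel)
  -- `ψ' = -t φ''` is dominated by the derivative of the comparison function `K t^(β+1)/(β+1)`.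
  have hB : ∀ t, HasDerivAt (fun t => K * t ^ (β + 1) / (β + 1)) (K * t ^ β) t := fun t =>
    (((Real.hasDerivAt_rpow_const (p := β + 1) (Or.inr (by linarith))).const_mul K).div_const
      (β + 1)).congr_deriv (by rw [add_sub_cancel_right]; field_simp)
  have hψ'' : ∀ t ∈ Ico 0 S, ‖-(t • φ'' t)‖ ≤ K * t ^ β := by
    rintro t ⟨ht0, htS⟩
    rcases ht0.eq_or_lt with rfl | ht0
    · simp only [zero_smul, neg_zero, norm_zero]; positivity
    · calc ‖-(t • φ'' t)‖ = t * ‖φ'' t‖ := by rw [norm_neg, norm_smul, Real.norm_of_nonneg ht0.le]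
        _ ≤ t * (K * t ^ (β - 1)) := by gcongr; exact hφ'' t ⟨ht0, htS⟩
        _ = K * t ^ β := by rw [Real.rpow_sub_one ht0.ne']; field_simp
  have hψS : ‖ψ S‖ ≤ K * S ^ (β + 1) / (β + 1) :=
    image_norm_le_of_norm_deriv_right_le_deriv_boundary
      (fun t ht => (hψ t ht).continuousAt.continuousWithinAt)
      (fun t ht => (hψ t (Ico_subset_Icc_self ht)).hasDerivWithinAt)
      (by simp [ψ, Real.zero_rpow (by linarith : β + 1 ≠ 0)]) hB hψ'' ⟨hS, le_rfl⟩
  calc ‖φ 0‖ = ‖φ S - S • φ' S - ψ S‖ := by simp [ψ]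
    _ ≤ ‖φ S‖ + ‖S • φ' S‖ + ‖ψ S‖ := norm_sub_le_of_le (norm_sub_le _ _) le_rfl
    _ ≤ _ := by rw [norm_smul, Real.norm_of_nonneg hS]; linarith

section LevelSet

variable {E F : Type*} [NormedAddCommGroup E] [NormedSpace ℝ E] [NormedAddCommGroup F]
  [NormedSpace ℝ F] {u : E → ℝ} {K : ℝ≥0} {e : E}

lemma lt_of_mem_closedBall_add_smul (hu : LipschitzWith K u)
    (hue : ∀ y (s : ℝ), u (y + s • e) = u y + s) {x z : E} {r : ℝ} (hx : 0 < u x)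
    (hz : z ∈ Metric.closedBall (x + ((K + 1) * r) • e) r) : r < u z := by
  have hdrop : u (x + ((K + 1) * r) • e) - u z ≤ K * r :=
    calc _ ≤ dist (u (x + ((K + 1) * r) • e)) (u z) := le_abs_self _
      _ ≤ K * dist (x + ((K + 1) * r) • e) z := hu.dist_le_mul _ _
      _ ≤ K * r := by gcongr; rw [dist_comm]; exact hz
  rw [hue] at hdrop
  linarith

variable {f : E → F} {A β : ℝ}

lemma norm_fderiv_fderiv_le_rpow_of_le (hA : 0 ≤ A) (hβ1 : β < 1)
    (hf'' : ∀ y, 0 < u y → ‖fderiv ℝ (fderiv ℝ f) y‖ ≤ A * u y ^ (β - 1)) {a : ℝ} {y : E}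
    (ha : 0 < a) (hay : a ≤ u y) : ‖fderiv ℝ (fderiv ℝ f) y‖ ≤ A * a ^ (β - 1) :=
  (hf'' y (ha.trans_le hay)).trans
    (mul_le_mul_of_nonneg_left (Real.rpow_le_rpow_of_nonpos ha hay (by linarith)) hA)

lemma norm_secondDiff_add_smul_le (hu : LipschitzWith K u)
    (hue : ∀ y (s : ℝ), u (y + s • e) = u y + s) (hf : ∀ y, 0 < u y → ContDiffAt ℝ 2 f y)
    (hA : 0 ≤ A) (hβ1 : β < 1)
    (hf'' : ∀ y, 0 < u y → ‖fderiv ℝ (fderiv ℝ f) y‖ ≤ A * u y ^ (β - 1))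
    {x h : E} (hx : 0 < u x) (hh : 0 < ‖h‖) :
    ‖secondDiff f (x + ((K + 1) * ‖h‖) • e) h‖ ≤ A * ‖h‖ ^ (β + 1) ∧
      ‖secondDiff (fderiv ℝ f) (x + ((K + 1) * ‖h‖) • e) h‖ ≤ 2 * A * ‖h‖ ^ β := by
  set y := x + ((K + 1) * ‖h‖) • e
  have hball : ∀ z ∈ Metric.closedBall y ‖h‖, ‖h‖ < u z := fun z hz =>
    lt_of_mem_closedBall_add_smul hu hue hx hz
  have hC2 : ∀ z ∈ Metric.closedBall y ‖h‖, ContDiffAt ℝ 2 f z := fun z hz =>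
    hf z (hh.trans (hball z hz))
  have hM : ∀ z ∈ Metric.closedBall y ‖h‖, ‖fderiv ℝ (fderiv ℝ f) z‖ ≤ A * ‖h‖ ^ (β - 1) :=
    fun z hz => norm_fderiv_fderiv_le_rpow_of_le hA hβ1 hf'' hh (hball z hz).le
  have hadd : y + h ∈ Metric.closedBall y ‖h‖ := by simp
  have hsub : y - h ∈ Metric.closedBall y ‖h‖ := by simp
  have hy : y ∈ Metric.closedBall y ‖h‖ := Metric.mem_closedBall_self hh.le
  constructor
  · calc _ ≤ A * ‖h‖ ^ (β - 1) * ‖h‖ ^ 2 := norm_secondDiff_le_of_norm_fderiv_fderiv_le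
          (convex_closedBall y _) hC2 hM hadd hsub hy
      _ = A * ‖h‖ ^ (β + 1) := by
          rw [mul_assoc, ← Real.rpow_natCast, ← Real.rpow_add hh]; congr 2; push_cast; ring
  · calc _ ≤ 2 * (A * ‖h‖ ^ (β - 1) * ‖h‖) := norm_secondDiff_fderiv_le_of_norm_fderiv_fderiv_le
          (convex_closedBall y _) hC2 hM hadd hsub hy
      _ = 2 * A * ‖h‖ ^ β := by rw [Real.rpow_sub_one hh.ne']; field_simp

lemma norm_secondDiff_le_of_add_smul (hue : ∀ y (s : ℝ), u (y + s • e) = u y + s)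
    (hf : ∀ y, 0 < u y → ContDiffAt ℝ 2 f y) (hA : 0 ≤ A) (hβ0 : 0 ≤ β) (hβ1 : β < 1)
    (hf'' : ∀ y, 0 < u y → ‖fderiv ℝ (fderiv ℝ f) y‖ ≤ A * u y ^ (β - 1))
    {x h : E} (hxh : 0 < u (x + h)) (hxh' : 0 < u (x - h)) (hx : 0 < u x) {S : ℝ}
    (hS : 0 ≤ S) :
    ‖secondDiff f x h‖ ≤ ‖secondDiff f (x + S • e) h‖
      + S * ‖secondDiff (fderiv ℝ f) (x + S • e) h e‖ + 4 * A * ‖e‖ ^ 2 * S ^ (β + 1) / (β + 1) := by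
  have hheight : ∀ t : ℝ, t < u (x + t • e + h) ∧ t < u (x + t • e - h) ∧ t < u (x + t • e) :=
    fun t => by
      refine ⟨?_, ?_, ?_⟩ <;> [rw [add_right_comm, hue]; rw [add_sub_right_comm, hue]; rw [hue]]
        <;> linarith
  have hC2 : ∀ t ∈ Icc 0 S, ContDiffAt ℝ 2 f (x + t • e + h) ∧
      ContDiffAt ℝ 2 f (x + t • e - h) ∧ ContDiffAt ℝ 2 f (x + t • e) := fun t ht =>
    ⟨hf _ (ht.1.trans_lt (hheight t).1), hf _ (ht.1.trans_lt (hheight t).2.1),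
      hf _ (ht.1.trans_lt (hheight t).2.2)⟩
  have hF : ∀ t ∈ Icc 0 S, HasDerivAt (fun s : ℝ => secondDiff f (x + s • e) h)
      (secondDiff (fderiv ℝ f) (x + t • e) h e) t := fun t ht => by
    obtain ⟨hadd, hsub, hz⟩ := hC2 t ht
    exact hasDerivAt_secondDiff_comp_line (hadd.differentiableAt two_ne_zero)
      (hsub.differentiableAt two_ne_zero) (hz.differentiableAt two_ne_zero)
  have hF' : ∀ t ∈ Icc 0 S, HasDerivAt (fun s : ℝ => secondDiff (fderiv ℝ f) (x + s • e) h e)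
      (secondDiff (fderiv ℝ (fderiv ℝ f)) (x + t • e) h e e) t := fun t ht => by
    obtain ⟨hadd, hsub, hz⟩ := hC2 t ht
    simpa using (hasDerivAt_secondDiff_comp_line hadd.differentiableAt_fderiv
      hsub.differentiableAt_fderiv hz.differentiableAt_fderiv).clm_apply (hasDerivAt_const t e)
  have hF'' : ∀ t ∈ Ioo 0 S, ‖secondDiff (fderiv ℝ (fderiv ℝ f)) (x + t • e) h e e‖ ≤
      4 * A * ‖e‖ ^ 2 * t ^ (β - 1) := fun t ht => by
    have hbound := fun y => norm_fderiv_fderiv_le_rpow_of_le (y := y) hA hβ1 hf'' ht.1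
    calc _ ≤ ‖secondDiff (fderiv ℝ (fderiv ℝ f)) (x + t • e) h‖ * ‖e‖ * ‖e‖ :=
          ContinuousLinearMap.le_opNorm₂ _ _ _
      _ ≤ 4 * (A * t ^ (β - 1)) * ‖e‖ * ‖e‖ := by
          gcongr
          exact norm_secondDiff_le_of_forall_norm_le (φ := fderiv ℝ (fderiv ℝ f))
            (hbound _ (hheight t).1.le) (hbound _ (hheight t).2.1.le) (hbound _ (hheight t).2.2.le)
      _ = _ := by ring
  simpa using norm_image_zero_le_of_norm_deriv_deriv_le_rpow hS (by positivity) hβ0 hF hF' hF''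

theorem norm_secondDiff_le_of_norm_fderiv_fderiv_le_rpow (hu : LipschitzWith K u)
    (hue : ∀ y (s : ℝ), u (y + s • e) = u y + s) (hf : ContDiffOn ℝ 2 f {y | 0 < u y})
    (hA : 0 ≤ A) (hβ0 : 0 ≤ β) (hβ1 : β < 1)
    (hf'' : ∀ y, 0 < u y → ‖fderiv ℝ (fderiv ℝ f) y‖ ≤ A * u y ^ (β - 1))
    {x h : E} (hxh : 0 < u (x + h)) (hxh' : 0 < u (x - h)) (hx : 0 < u x) :
    ‖secondDiff f x h‖ ≤
      (1 + 2 * (K + 1) * ‖e‖ + 4 * ‖e‖ ^ 2 * (K + 1) ^ (β + 1) / (β + 1)) * A * ‖h‖ ^ (β + 1) := by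
  have hC2 : ∀ y, 0 < u y → ContDiffAt ℝ 2 f y := fun y hy =>
    hf.contDiffAt ((isOpen_lt continuous_const hu.continuous).mem_nhds hy)
  rcases (norm_nonneg h).eq_or_lt with hh | hh
  · rw [norm_eq_zero.1 hh.symm]
    simp [secondDiff, two_nsmul, Real.zero_rpow (by linarith : β + 1 ≠ 0)]
  set S : ℝ := (K + 1) * ‖h‖
  obtain ⟨hFS, hF'S⟩ := norm_secondDiff_add_smul_le hu hue hC2 hA hβ1 hf'' hx hh
  have hF'Se : ‖secondDiff (fderiv ℝ f) (x + S • e) h e‖ ≤ 2 * A * ‖h‖ ^ β * ‖e‖ :=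
    (ContinuousLinearMap.le_opNorm _ _).trans (by gcongr)
  calc ‖secondDiff f x h‖
      ≤ A * ‖h‖ ^ (β + 1) + S * (2 * A * ‖h‖ ^ β * ‖e‖)
        + 4 * A * ‖e‖ ^ 2 * S ^ (β + 1) / (β + 1) := by
        refine (norm_secondDiff_le_of_add_smul hue hC2 hA hβ0 hβ1 hf'' hxh hxh' hx
          (S := S) (by positivity)).trans ?_
        gcongr
    _ = _ := by
        rw [Real.mul_rpow (by positivity) hh.le, Real.rpow_add_one hh.ne']
        ring

end LevelSet

lemma LipschitzWith.div_le_infDist {α : Type*} [PseudoMetricSpace α] {u : α → ℝ} {K : ℝ≥0}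
    (hu : LipschitzWith K u) {s : Set α} (hs : s.Nonempty) (hus : ∀ z ∈ s, u z = 0) (y : α) :
    u y / K ≤ infDist y s :=
  (le_infDist hs).2 fun z hz => div_le_of_le_mul₀ K.coe_nonneg dist_nonneg <| by
    simpa [hus z hz, mul_comm] using (le_abs_self _).trans (hu.dist_le_mul y z)

lemma norm_iteratedFDerivWithin_two_of_isOpen {E F : Type*} [NormedAddCommGroup E]
    [NormedSpace ℝ E] [NormedAddCommGroup F] [NormedSpace ℝ F] {f : E → F} {D : Set E}
    (hD : IsOpen D) {y : E} (hy : y ∈ D) :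
    ‖iteratedFDerivWithin ℝ 2 f D y‖ = ‖fderiv ℝ (fderiv ℝ f) y‖ := by
  rw [iteratedFDerivWithin_of_isOpen 2 hD hy, ← norm_iteratedFDeriv_fderiv,
    norm_iteratedFDeriv_one]

section Epigraph

variable (m : ℕ) (g : EuclideanSpace ℝ (Fin m) → ℝ)

def epigraphHeight (y : EuclideanSpace ℝ (Fin (m + 1))) : ℝ :=
  y (Fin.last m) - g (WithLp.toLp 2 (fun i : Fin m => y i.castSucc))

lemma epigraph_eq : epigraph m g = {y | 0 < epigraphHeight m g y} := by
  ext y; simp [epigraph, epigraphHeight]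

lemma graphSet_eq : graphSet m g = {y | epigraphHeight m g y = 0} := by
  ext y; simp [graphSet, epigraphHeight, sub_eq_zero]

lemma graphSet_nonempty : (graphSet m g).Nonempty :=
  ⟨EuclideanSpace.single (Fin.last m) (g 0), by
    simp [graphSet, Fin.castSucc_ne_last]; rfl⟩

lemma epigraphHeight_add_smul_single (y : EuclideanSpace ℝ (Fin (m + 1))) (s : ℝ) :
    epigraphHeight m g (y + s • EuclideanSpace.single (Fin.last m) 1) =
      epigraphHeight m g y + s := by
  simp [epigraphHeight, Fin.castSucc_ne_last]
  ring

variable {m g}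

lemma lipschitzWith_epigraphHeight {K : ℝ≥0} (hg : LipschitzWith K g) :
    LipschitzWith (1 + K) (epigraphHeight m g) := by
  have hlast : LipschitzWith 1 fun y : EuclideanSpace ℝ (Fin (m + 1)) => y (Fin.last m) :=
    LipschitzWith.of_dist_le_mul fun y z => by simpa using PiLp.dist_apply_le y z (Fin.last m)
  have hbase : LipschitzWith 1 fun y : EuclideanSpace ℝ (Fin (m + 1)) =>
      (WithLp.toLp 2 (fun i : Fin m => y i.castSucc) : EuclideanSpace ℝ (Fin m)) :=
    LipschitzWith.of_dist_le_mul fun y z => by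
      simp only [NNReal.coe_one, one_mul, EuclideanSpace.dist_eq]
      gcongr
      simp [Fin.sum_univ_castSucc (f := fun i => dist (y i) (z i) ^ 2)]
  have := hlast.sub (hg.comp hbase)
  rwa [mul_one] at this

end Epigraph

theorem stmt0_general (m : ℕ) (L β : ℝ) (hβ0 : 0 ≤ β) (hβ1 : β < 1) :
    ∃ C : ℝ, ∀ g : EuclideanSpace ℝ (Fin m) → ℝ, LipschitzWith (Real.toNNReal L) g →
      ∀ (A : ℝ), 0 ≤ A →
      ∀ f : EuclideanSpace ℝ (Fin (m + 1)) → ℝ,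
        ContDiffOn ℝ 2 f (epigraph m g) →
        (∀ x ∈ epigraph m g,
          ‖iteratedFDerivWithin ℝ 2 f (epigraph m g) x‖ ≤
            A * Metric.infDist x (graphSet m g) ^ (β - 1)) →
        ∀ x h : EuclideanSpace ℝ (Fin (m + 1)),
          x ∈ epigraph m g → x + h ∈ epigraph m g → x - h ∈ epigraph m g →
          |f (x + h) + f (x - h) - 2 * f x| ≤ C * A * ‖h‖ ^ (1 + β) := by
  set K : ℝ≥0 := 1 + L.toNNReal
  have hK : (0 : ℝ) < K := by positivity
  refine ⟨(1 + 2 * (K + 1) + 4 * (K + 1) ^ (β + 1) / (β + 1)) * K ^ (1 - β), ?_⟩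
  intro g hg A hA f hf hf'' x h hx hxh hxh'
  rw [epigraph_eq] at hf hf'' hx hxh hxh'
  have hu : LipschitzWith K (epigraphHeight m g) := lipschitzWith_epigraphHeight hg
  -- The distance to the graph is comparable to the height above it.
  have hf''' : ∀ y, 0 < epigraphHeight m g y →
      ‖fderiv ℝ (fderiv ℝ f) y‖ ≤ A * K ^ (1 - β) * epigraphHeight m g y ^ (β - 1) := by
    intro y hy
    rw [← norm_iteratedFDerivWithin_two_of_isOpen (isOpen_lt continuous_const hu.continuous) hy]
    have hdist := hu.div_le_infDist (graphSet_nonempty m g) (by simp [graphSet_eq]) y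
    calc _ ≤ A * infDist y (graphSet m g) ^ (β - 1) := hf'' y hy
      _ ≤ A * (epigraphHeight m g y / K) ^ (β - 1) := mul_le_mul_of_nonneg_left
          (Real.rpow_le_rpow_of_nonpos (div_pos hy hK) hdist (by linarith)) hA
      _ = _ := by
          rw [Real.div_rpow hy.le hK.le, show 1 - β = -(β - 1) by ring, Real.rpow_neg hK.le]
          ring
  have he : ‖EuclideanSpace.single (Fin.last m) (1 : ℝ)‖ = 1 := by simp
  have := norm_secondDiff_le_of_norm_fderiv_fderiv_le_rpow hu
    (epigraphHeight_add_smul_single m g) hf (by positivity) hβ0 hβ1 hf''' hxh hxh' hx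
  rw [he, Real.norm_eq_abs, secondDiff, two_nsmul, ← two_mul, add_comm β 1] at this
  refine this.trans_eq ?_
  rw [add_comm 1 β]
  ring

/-- Hardy–Littlewood-type lemma (Lemma 5.1). -/
theorem stmt0 (m : ℕ) (hm : 1 ≤ m) (L β : ℝ) (hL : 1 ≤ L) (hβ0 : 0 ≤ β) (hβ1 : β < 1) :
    ∃ C : ℝ, ∀ g : EuclideanSpace ℝ (Fin m) → ℝ, LipschitzWith (Real.toNNReal L) g →
      ∀ (A : ℝ), 0 ≤ A →
      ∀ f : EuclideanSpace ℝ (Fin (m + 1)) → ℝ,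
        ContDiffOn ℝ 2 f (epigraph m g) →
        (∀ x ∈ epigraph m g,
          ‖iteratedFDerivWithin ℝ 2 f (epigraph m g) x‖ ≤
            A * Metric.infDist x (graphSet m g) ^ (β - 1)) →
        ∀ x h : EuclideanSpace ℝ (Fin (m + 1)),
          x ∈ epigraph m g → x + h ∈ epigraph m g → x - h ∈ epigraph m g →
          |f (x + h) + f (x - h) - 2 * f x| ≤ C * A * ‖h‖ ^ (1 + β) :=
  stmt0_general m L β hβ0 hβ1
end

section
/- Equivalence of Hölder–Zygmund seminorms (Proposition 5.2): Let n ≥ 2, L ≥ 1 and r > 0. Let g : ℝ^{n−1} → ℝ be an L-Lipschitz function and let D = {x ∈ ℝⁿ : x_n > g(x₁,…,x_{n−1})} be its open epigraph. Let f : D → ℝ have continuous partial derivatives ∂^α f on D for all multi-indices α with |α| < r. Define M(f) = sup_{x∈D} |f(x)| + sup { |∂^α f(x+2h) + ∂^α f(x) − 2 ∂^α f(x+h)| / |h|^{r−|α|} : |α| < r, h ∈ ℝⁿ \ {0}, and the segment [x, x+2h] is contained in D }, and assume M(f) < ∞. Then there is a constant C, depending only on n, L and r, such that for every multi-index α with |α|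 < r, every x ∈ D and every h ≠ 0 with x+h, x−h ∈ D, one has |∂^α f(x)| + |∂^α f(x+h) + ∂^α f(x−h) − 2 ∂^α f(x)| / |h|^{r−|α|} ≤ C · M(f). -/
open Metric

/-- The partial derivative within `D` in the `i`-th coordinate direction. -/
noncomputable def pderivOn (m : ℕ) (D : Set (EuclideanSpace ℝ (Fin (m + 1)))) (i : Fin (m + 1))
    (f : EuclideanSpace ℝ (Fin (m + 1)) → ℝ) : EuclideanSpace ℝ (Fin (m + 1)) → ℝ :=
  fun x => fderivWithin ℝ f D x (EuclideanSpace.single i 1)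

/-- The iterated partial derivative `∂^α f` within `D`, for a multi-index `α`. -/
noncomputable def mderivOn (m : ℕ) (D : Set (EuclideanSpace ℝ (Fin (m + 1))))
    (α : Fin (m + 1) → ℕ) (f : EuclideanSpace ℝ (Fin (m + 1)) → ℝ) :
    EuclideanSpace ℝ (Fin (m + 1)) → ℝ :=
  ((List.ofFn fun i : Fin (m + 1) => (pderivOn m D i)^[α i]).foldr (· ∘ ·) id) f

/-!
From every point of the epigraph of a `K`-Lipschitz function, the vertical cone
`{w : K ‖w'‖ ≤ wₙ}` points into the domain. Along a ray in that cone the dyadic second differences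
of `F` at the scales `2⁻ᵏ` telescope to the directional derivative, which is therefore bounded by
`|F(y + d) - F(y)|` plus a geometric series; writing `eᵢ` as the difference of two cone directions
bounds `∂ᵢ F`, and induction on `|α|` bounds `∂^α f` by a multiple of `M`. For the centered second
difference at `x`, lift by a vertical vector `v` of length `(K + 1)‖h‖`: then `Δ²ₕ F(x)` is an
alternating sum of five second differences along segments, each lying in the cone translated to
`x`, `x + h` or `x - h`.
-/

open Set Filter Topology
open scoped NNReal

section Cone

variable {m : ℕ}

def baseProj (x : EuclideanSpace ℝ (Fin (m + 1))) : EuclideanSpace ℝ (Fin m) :=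
  WithLp.toLp 2 (fun i : Fin m => x i.castSucc)

lemma baseProj_add (x y : EuclideanSpace ℝ (Fin (m + 1))) :
    baseProj (x + y) = baseProj x + baseProj y := by
  ext i; simp [baseProj]

lemma baseProj_smul (c : ℝ) (x : EuclideanSpace ℝ (Fin (m + 1))) :
    baseProj (c • x) = c • baseProj x := by
  ext i; simp [baseProj]

lemma baseProj_single_last (c : ℝ) :
    baseProj (EuclideanSpace.single (Fin.last m) c) = 0 := by
  ext i; simp [baseProj]

lemma norm_baseProj_le (x : EuclideanSpace ℝ (Fin (m + 1))) : ‖baseProj x‖ ≤ ‖x‖ := by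
  simp only [EuclideanSpace.norm_eq, Fin.sum_univ_castSucc (f := fun i => ‖x i‖ ^ 2)]
  exact Real.sqrt_le_sqrt (le_add_of_nonneg_right (sq_nonneg _))

def verticalCone (K : ℝ≥0) : Set (EuclideanSpace ℝ (Fin (m + 1))) :=
  {w | K * ‖baseProj w‖ ≤ w (Fin.last m)}

lemma smul_mem_verticalCone {K : ℝ≥0} {w : EuclideanSpace ℝ (Fin (m + 1))} (hw : w ∈ verticalCone K)
    {t : ℝ} (ht : 0 ≤ t) : t • w ∈ verticalCone K := by
  simp only [verticalCone, mem_ofPred_eq, baseProj_smul, norm_smul, Real.norm_of_nonneg ht,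
    PiLp.smul_apply, smul_eq_mul] at hw ⊢
  nlinarith

lemma convex_verticalCone (K : ℝ≥0) :
    Convex ℝ (verticalCone K : Set (EuclideanSpace ℝ (Fin (m + 1)))) := by
  intro u hu w hw a b ha hb _
  simp only [verticalCone, mem_ofPred_eq, baseProj_add, baseProj_smul, PiLp.add_apply,
    PiLp.smul_apply, smul_eq_mul] at hu hw ⊢
  calc (K : ℝ) * ‖a • baseProj u + b • baseProj w‖
      ≤ K * (a * ‖baseProj u‖ + b * ‖baseProj w‖) := by
        gcongr
        refine (norm_add_le _ _).trans_eq ?_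
        rw [norm_smul, norm_smul, Real.norm_of_nonneg ha, Real.norm_of_nonneg hb]
    _ ≤ a * u (Fin.last m) + b * w (Fin.last m) := by nlinarith

lemma smul_single_last_add_mem_verticalCone (K : ℝ≥0) {w : EuclideanSpace ℝ (Fin (m + 1))} {t : ℝ}
    (ht : (K + 1) * ‖w‖ ≤ t) :
    t • EuclideanSpace.single (Fin.last m) 1 + w ∈ verticalCone K := by
  have hlast : -‖w‖ ≤ w (Fin.last m) :=
    neg_le_of_abs_le ((Real.norm_eq_abs _).symm.trans_le (PiLp.norm_apply_le w _))
  have hproj := norm_baseProj_le w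
  simp only [verticalCone, mem_ofPred_eq, baseProj_add, baseProj_smul, baseProj_single_last,
    smul_zero, zero_add, PiLp.add_apply, PiLp.smul_apply, PiLp.single_eq_same,
    smul_eq_mul, mul_one]
  nlinarith [K.2]

noncomputable def verticalLift (K : ℝ≥0) (h : EuclideanSpace ℝ (Fin (m + 1))) :
    EuclideanSpace ℝ (Fin (m + 1)) :=
  (((K : ℝ) + 1) * ‖h‖) • EuclideanSpace.single (Fin.last m) 1

lemma norm_verticalLift (K : ℝ≥0) (h : EuclideanSpace ℝ (Fin (m + 1))) :
    ‖verticalLift K h‖ = (K + 1) * ‖h‖ := by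
  rw [verticalLift, norm_smul, PiLp.norm_single, norm_one, mul_one,
    Real.norm_of_nonneg (by positivity)]

lemma smul_verticalLift_add_smul_mem_verticalCone {K : ℝ≥0} {h : EuclideanSpace ℝ (Fin (m + 1))}
    {a b : ℝ} (hab : |b| ≤ a) : a • verticalLift K h + b • h ∈ verticalCone K := by
  rw [verticalLift, smul_smul]
  apply smul_single_last_add_mem_verticalCone
  rw [norm_smul, Real.norm_eq_abs]
  have := mul_le_mul_of_nonneg_right hab (by positivity : (0 : ℝ) ≤ (K + 1) * ‖h‖)
  linarith

lemma norm_smul_verticalLift_add_smul_le (K : ℝ≥0) (h : EuclideanSpace ℝ (Fin (m + 1)))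
    {a b : ℝ} (ha : |a| ≤ 1) (hb : |b| ≤ 1) :
    ‖a • verticalLift K h + b • h‖ ≤ (K + 2) * ‖h‖ := by
  refine (norm_add_le _ _).trans ?_
  rw [norm_smul, norm_smul, norm_verticalLift, Real.norm_eq_abs, Real.norm_eq_abs]
  nlinarith [mul_le_mul_of_nonneg_right ha (by positivity : (0 : ℝ) ≤ (K + 1) * ‖h‖),
    mul_le_mul_of_nonneg_right hb (norm_nonneg h)]

variable {g : EuclideanSpace ℝ (Fin m) → ℝ} {K : ℝ≥0}

lemma add_mem_epigraph (hg : LipschitzWith K g) {z w : EuclideanSpace ℝ (Fin (m + 1))}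
    (hz : z ∈ epigraph m g) (hw : w ∈ verticalCone K) : z + w ∈ epigraph m g := by
  have hlip : g (baseProj z + baseProj w) ≤ g (baseProj z) + K * ‖baseProj w‖ := by
    have := hg.dist_le_mul (baseProj z + baseProj w) (baseProj z)
    rw [Real.dist_eq, dist_eq_norm, add_sub_cancel_left] at this
    linarith [le_abs_self (g (baseProj z + baseProj w) - g (baseProj z))]
  change g (baseProj (z + w)) < z (Fin.last m) + w (Fin.last m)
  rw [baseProj_add]
  exact hlip.trans_lt (add_lt_add_of_lt_of_le hz hw)

lemma segment_subset_epigraph (hg : LipschitzWith K g) {z p q : EuclideanSpace ℝ (Fin (m + 1))}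
    (hz : z ∈ epigraph m g) (hp : p - z ∈ verticalCone K) (hq : q - z ∈ verticalCone K) :
    segment ℝ p q ⊆ epigraph m g := by
  have hconv : Convex ℝ ((fun x => x + -z) ⁻¹' verticalCone K) :=
    (convex_verticalCone K).translate_preimage_left (-z)
  intro x hx
  have hx' : x - z ∈ verticalCone K := by
    simpa [← sub_eq_add_neg] using hconv.segment_subset (by simpa [← sub_eq_add_neg] using hp)
      (by simpa [← sub_eq_add_neg] using hq) hx
  simpa using add_mem_epigraph hg hz hx'

end Cone

/-- The second-difference bound of the modified norm `Λ̃` (only segments `[x, x + 2h] ⊆ D`),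
for a single exponent `σ`. -/
def ZygmundOn {E : Type*} [NormedAddCommGroup E] [NormedSpace ℝ E] (D : Set E) (F : E → ℝ)
    (M σ : ℝ) : Prop :=
  ∀ x h : E, h ≠ 0 → segment ℝ x (x + 2 • h) ⊆ D →
    |F (x + 2 • h) + F x - 2 * F (x + h)| ≤ M * ‖h‖ ^ σ

lemma ZygmundOn.abs_second_diff_le {E : Type*} [NormedAddCommGroup E] [NormedSpace ℝ E] {D : Set E}
    {F : E → ℝ} {M σ : ℝ} (hF : ZygmundOn D F M σ) (hσ : σ ≠ 0) {p q c k : E}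
    (hq : q = p + 2 • k) (hc : c = p + k) (hseg : segment ℝ p q ⊆ D) :
    |F q + F p - 2 * F c| ≤ M * ‖k‖ ^ σ := by
  subst hq hc
  rcases eq_or_ne k 0 with rfl | hk
  · simp [Real.zero_rpow hσ]
    ring
  · exact hF p k hk hseg

lemma two_lt_two_rpow {σ : ℝ} (hσ : 1 < σ) : 2 < (2 : ℝ) ^ σ := by
  simpa using Real.rpow_lt_rpow_of_exponent_lt one_lt_two hσ

lemma HasDerivWithinAt.abs_sub_sub_le_of_second_diff_le {φ : ℝ → ℝ} {l c σ : ℝ}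
    (hφ : HasDerivWithinAt φ l (Ici 0) 0) (hσ : 1 < σ)
    (h2 : ∀ s : ℝ, 0 < s → s ≤ 1 / 2 → |φ (2 * s) + φ 0 - 2 * φ s| ≤ c * s ^ σ) :
    |l - (φ 1 - φ 0)| ≤ c / (2 ^ σ - 2) := by
  set t : ℝ := 2 ^ (σ - 1)
  have ht : 1 < t := Real.one_lt_rpow one_lt_two (by linarith)
  have hslope : Tendsto (fun k : ℕ => slope φ 0 ((2⁻¹ : ℝ) ^ k)) atTop (𝓝 l) := by
    have := (hasDerivWithinAt_iff_tendsto_slope' (lt_irrefl 0)).mp (hφ.mono Ioi_subset_Ici_self)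
    exact this.comp (tendsto_pow_atTop_nhdsWithin_zero_of_lt_one (by norm_num) (by norm_num))
  have hstep : ∀ k : ℕ, dist (slope φ 0 ((2⁻¹ : ℝ) ^ k)) (slope φ 0 ((2⁻¹ : ℝ) ^ (k + 1))) ≤
      c / (2 * t) * t⁻¹ ^ k := by
    intro k
    set s : ℝ := (2⁻¹ : ℝ) ^ (k + 1)
    have hs : 0 < s := by positivity
    have h2s : (2⁻¹ : ℝ) ^ k = 2 * s := by simp only [s, pow_succ]; ring
    have hsσ : s ^ σ = s * (t ^ (k + 1))⁻¹ := by
      have : s ^ (σ - 1) = (t ^ (k + 1))⁻¹ := by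
        rw [← Real.rpow_pow_comm (by norm_num), Real.inv_rpow (by norm_num), inv_pow]
      rw [← this, ← Real.rpow_one_add' hs.le (by linarith)]
      ring_nf
    have hdiff : slope φ 0 ((2⁻¹ : ℝ) ^ k) - slope φ 0 s =
        (φ (2 * s) + φ 0 - 2 * φ s) / (2 * s) := by
      rw [h2s, slope_def_field, slope_def_field, sub_zero, sub_zero]
      field_simp [hs.ne']
      ring
    have h2s0 : 0 < 2 * s := by linarith
    rw [Real.dist_eq, hdiff, abs_div, abs_of_pos h2s0, div_le_iff₀ h2s0]
    have hs2 : s ≤ 1 / 2 := by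
      rw [one_div]
      exact pow_le_of_le_one (by norm_num) (by norm_num) k.succ_ne_zero
    calc |φ (2 * s) + φ 0 - 2 * φ s| ≤ c * s ^ σ := h2 s hs hs2
      _ = c / (2 * t) * t⁻¹ ^ k * (2 * s) := by
        rw [hsσ, inv_pow, pow_succ]
        field_simp
  have := dist_le_of_le_geometric_of_tendsto₀ _ _ (inv_lt_one_of_one_lt₀ ht) hstep hslope
  have h2σ : (2 : ℝ) ^ σ = 2 * t := by
    rw [← Real.rpow_one_add' (by norm_num) (by linarith)]; ring_nf
  have hC : c / (2 * t) / (1 - t⁻¹) = c / (2 ^ σ - 2) := by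
    rw [h2σ]
    field_simp
  rw [dist_comm, Real.dist_eq, hC] at this
  simpa [slope_def_field] using this

lemma ZygmundOn.abs_fderivWithin_apply_le {E : Type*} [NormedAddCommGroup E] [NormedSpace ℝ E]
    {D : Set E} {F : E → ℝ} {M σ : ℝ} (hF : ZygmundOn D F M σ) (hσ : 1 < σ) (hM : 0 ≤ M)
    {y d : E} (hray : ∀ t : ℝ, 0 ≤ t → y + t • d ∈ D) :
    |fderivWithin ℝ F D y d| ≤ |F (y + d) - F y| + M * ‖d‖ ^ σ / (2 ^ σ - 2) := by
  have hden : 0 < (2 : ℝ) ^ σ - 2 := sub_pos.mpr (two_lt_two_rpow hσ)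
  by_cases hdiff : DifferentiableWithinAt ℝ F D y
  swap
  · rw [fderivWithin_zero_of_not_differentiableWithinAt hdiff, zero_apply, abs_zero]
    positivity
  set φ : ℝ → ℝ := fun t => F (y + t • d)
  have hφ : HasDerivWithinAt φ (fderivWithin ℝ F D y d) (Ici 0) 0 := by
    have hray' : HasDerivWithinAt (fun t : ℝ => y + t • d) d (Ici 0) 0 := by
      simpa using (((hasDerivAt_id (0 : ℝ)).smul_const d).const_add y).hasDerivWithinAt
    exact hdiff.hasFDerivWithinAt.comp_hasDerivWithinAt_of_eq 0 hray' hray (by simp)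
  have h2 : ∀ s : ℝ, 0 < s → s ≤ 1 / 2 →
      |φ (2 * s) + φ 0 - 2 * φ s| ≤ M * ‖d‖ ^ σ * s ^ σ := by
    intro s hs _
    have hseg : segment ℝ (y + (0 : ℝ) • d) (y + (2 * s) • d) ⊆ D := by
      rw [segment_eq_image']
      rintro _ ⟨θ, ⟨hθ, -⟩, rfl⟩
      convert hray (θ * (2 * s)) (by positivity) using 1
      module
    calc |φ (2 * s) + φ 0 - 2 * φ s| ≤ M * ‖s • d‖ ^ σ :=
          hF.abs_second_diff_le (by linarith) (k := s • d) (by module) (by module) hseg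
      _ = M * ‖d‖ ^ σ * s ^ σ := by
          rw [norm_smul, Real.norm_of_nonneg hs.le, Real.mul_rpow hs.le (norm_nonneg d)]
          ring
  have key := hφ.abs_sub_sub_le_of_second_diff_le hσ h2
  simp only [φ, one_smul, zero_smul, add_zero] at key
  have := abs_sub_abs_le_abs_sub (fderivWithin ℝ F D y d) (F (y + d) - F y)
  linarith

section Epigraph

variable {m : ℕ} {g : EuclideanSpace ℝ (Fin m) → ℝ} {K : ℝ≥0}
  {F : EuclideanSpace ℝ (Fin (m + 1)) → ℝ} {M σ : ℝ}

lemma ZygmundOn.abs_pderivOn_le (hg : LipschitzWith K g) (hF : ZygmundOn (epigraph m g) F M σ)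
    (hσ : 1 < σ) (hM : 0 ≤ M) {S : ℝ} (hS : ∀ z ∈ epigraph m g, |F z| ≤ S)
    {y : EuclideanSpace ℝ (Fin (m + 1))} (hy : y ∈ epigraph m g) (i : Fin (m + 1)) :
    |pderivOn m (epigraph m g) i F y| ≤ 4 * S + 2 * (M * (K + 2) ^ σ / (2 ^ σ - 2)) := by
  set u := ((K : ℝ) + 1) • EuclideanSpace.single (Fin.last m) (1 : ℝ)
  have hden : 0 < (2 : ℝ) ^ σ - 2 := sub_pos.mpr (two_lt_two_rpow hσ)
  have hdir : ∀ w : EuclideanSpace ℝ (Fin (m + 1)), ‖w‖ ≤ 1 →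
      |fderivWithin ℝ F (epigraph m g) y (u + w)| ≤ 2 * S + M * (K + 2) ^ σ / (2 ^ σ - 2) := by
    intro w hw
    have hcone : u + w ∈ verticalCone K :=
      smul_single_last_add_mem_verticalCone K (by nlinarith [K.2])
    have hray : ∀ t : ℝ, 0 ≤ t → y + t • (u + w) ∈ epigraph m g :=
      fun t ht => add_mem_epigraph hg hy (smul_mem_verticalCone hcone ht)
    have hnorm : ‖u + w‖ ≤ K + 2 := by
      refine (norm_add_le _ _).trans ?_
      rw [norm_smul, PiLp.norm_single, norm_one, mul_one, Real.norm_of_nonneg (by positivity)]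
      linarith
    have hFd : |F (y + (u + w)) - F y| ≤ 2 * S := by
      have := abs_sub (F (y + (u + w))) (F y)
      linarith [hS _ (by simpa using hray 1 zero_le_one), hS y hy]
    refine (hF.abs_fderivWithin_apply_le hσ hM hray).trans ?_
    gcongr
  have hsplit : pderivOn m (epigraph m g) i F y =
      fderivWithin ℝ F (epigraph m g) y (u + EuclideanSpace.single i 1) -
        fderivWithin ℝ F (epigraph m g) y (u + 0) := by
    rw [← map_sub, add_sub_add_left_eq_sub, sub_zero]
    rfl
  rw [hsplit]
  refine (abs_sub _ _).trans ?_
  linarith [hdir (EuclideanSpace.single i 1) (by simp), hdir 0 (by simp)]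

lemma ZygmundOn.abs_centered_second_diff_le (hg : LipschitzWith K g)
    (hF : ZygmundOn (epigraph m g) F M σ) (hσ : 0 < σ) (hM : 0 ≤ M)
    {x h : EuclideanSpace ℝ (Fin (m + 1))} (hx : x ∈ epigraph m g) (hxp : x + h ∈ epigraph m g)
    (hxm : x - h ∈ epigraph m g) :
    |F (x + h) + F (x - h) - 2 * F x| ≤ 5 * (M * ((K + 2) * ‖h‖) ^ σ) := by
  set v := verticalLift K h
  have hcone : ∀ a b : ℝ, |b| ≤ a → ∀ w, w = a • v + b • h → w ∈ verticalCone K := by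
    rintro a b hab _ rfl
    exact smul_verticalLift_add_smul_mem_verticalCone hab
  have hT : ∀ z p q c : EuclideanSpace ℝ (Fin (m + 1)), ∀ a b : ℝ, z ∈ epigraph m g →
      |a| ≤ 1 → |b| ≤ 1 → q = p + 2 • (a • v + b • h) → c = p + (a • v + b • h) →
      p - z ∈ verticalCone K → q - z ∈ verticalCone K →
      |F q + F p - 2 * F c| ≤ M * ((K + 2) * ‖h‖) ^ σ := by
    intro z p q c a b hz ha hb hq hc hp hq'
    refine (hF.abs_second_diff_le hσ.ne' hq hc (segment_subset_epigraph hg hz hp hq')).trans ?_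
    gcongr
    exact norm_smul_verticalLift_add_smul_le K h ha hb
  have T1 := hT (x + h) (x + h) (x + (2 : ℝ) • v - h) (x + v) 1 (-1) hxp (by norm_num)
    (by norm_num) (by module) (by module) (hcone 0 0 (by norm_num) _ (by module))
    (hcone 2 (-2) (by norm_num) _ (by module))
  have T2 := hT x x (x + (2 : ℝ) • v - h) (x + v - (1 / 2 : ℝ) • h) 1 (-1 / 2) hx (by norm_num)
    (by norm_num) (by module) (by module) (hcone 0 0 (by norm_num) _ (by module))
    (hcone 2 (-1) (by norm_num) _ (by module))
  have T3 := hT x (x + v) (x + v - h) (x + v - (1 / 2 : ℝ) • h) 0 (-1 / 2) hx (by norm_num)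
    (by norm_num) (by module) (by module) (hcone 1 0 (by norm_num) _ (by module))
    (hcone 1 (-1) (by norm_num) _ (by module))
  have T4 := hT x x (x + v - h) (x + (1 / 2 : ℝ) • (v - h)) (1 / 2) (-1 / 2) hx (by norm_num)
    (by norm_num) (by module) (by module) (hcone 0 0 (by norm_num) _ (by module))
    (hcone 1 (-1) (by norm_num) _ (by module))
  have T5 := hT (x - h) (x + v) (x - h) (x + (1 / 2 : ℝ) • (v - h)) (-1 / 2) (-1 / 2) hxm
    (by norm_num) (by norm_num) (by module) (by module) (hcone 1 1 (by norm_num) _ (by module))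
    (hcone 0 0 (by norm_num) _ (by module))
  -- the centered second difference is `T1 - T2 + T3 - T4 + T5`
  rw [abs_le] at T1 T2 T3 T4 T5 ⊢
  constructor <;> linarith [T1.1, T1.2, T2.1, T2.2, T3.1, T3.2, T4.1, T4.2, T5.1, T5.2]

lemma ZygmundOn.abs_centered_second_diff_div_le (hg : LipschitzWith K g)
    (hF : ZygmundOn (epigraph m g) F M σ) (hσ : 0 < σ) {r : ℝ} (hσr : σ ≤ r) (hM : 0 ≤ M)
    {x h : EuclideanSpace ℝ (Fin (m + 1))} (hx : x ∈ epigraph m g) (hh : h ≠ 0)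
    (hxp : x + h ∈ epigraph m g) (hxm : x - h ∈ epigraph m g) :
    |F (x + h) + F (x - h) - 2 * F x| / ‖h‖ ^ σ ≤ 5 * (K + 2) ^ r * M := by
  have hh' := Real.rpow_pos_of_pos (norm_pos_iff.mpr hh) σ
  have hKr : ((K : ℝ) + 2) ^ σ ≤ (K + 2) ^ r :=
    Real.rpow_le_rpow_of_exponent_le (by linarith [K.2]) hσr
  rw [div_le_iff₀ hh']
  refine (hF.abs_centered_second_diff_le hg hσ hM hx hxp hxm).trans ?_
  rw [Real.mul_rpow (by positivity) (norm_nonneg h)]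
  nlinarith [mul_le_mul_of_nonneg_right hKr (mul_nonneg hM hh'.le)]

end Epigraph

lemma exists_foldr_comp_ofFn_iterate_eq {X : Type*} {n : ℕ} (T : Fin n → X → X) (a : Fin n → ℕ)
    (ha : a ≠ 0) :
    ∃ i, a i ≠ 0 ∧ (List.ofFn fun j => (T j)^[a j]).foldr (· ∘ ·) id =
      T i ∘ (List.ofFn fun j => (T j)^[Function.update a i (a i - 1) j]).foldr (· ∘ ·) id := by
  induction n with
  | zero => exact absurd (Subsingleton.elim a 0) ha
  | succ n ih =>
    simp only [List.ofFn_succ, List.foldr_cons]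
    rcases Nat.eq_zero_or_eq_succ_pred (a 0) with h0 | h0
    · have htail : (fun j : Fin n => a j.succ) ≠ 0 := by
        contrapose! ha
        ext j
        cases j using Fin.cases with
        | zero => exact h0
        | succ j => exact congrFun ha j
      obtain ⟨j, hj, hT⟩ := ih (fun j => T j.succ) _ htail
      refine ⟨j.succ, hj, ?_⟩
      simp only [h0, Function.iterate_zero, Function.update_of_ne (Fin.succ_ne_zero j).symm,
        Function.update_apply, Fin.succ_inj, Function.id_comp] at hT ⊢
      exact hT
    · refine ⟨0, by omega, ?_⟩
      simp only [Function.update_self, Function.update_of_ne (Fin.succ_ne_zero _)]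
      rw [h0, Function.iterate_succ', Nat.add_one_sub_one]
      rfl

section MultiIndex

variable {m : ℕ}

lemma mderivOn_zero (D : Set (EuclideanSpace ℝ (Fin (m + 1))))
    (f : EuclideanSpace ℝ (Fin (m + 1)) → ℝ) : mderivOn m D 0 f = f := by
  have hid : ∀ n, (List.replicate n (id : (EuclideanSpace ℝ (Fin (m + 1)) → ℝ) → _)).foldr
      (· ∘ ·) id = id := by
    intro n; induction n <;> simp_all [List.replicate_succ]
  simp [mderivOn, hid]

lemma exists_mderivOn_eq_pderivOn (D : Set (EuclideanSpace ℝ (Fin (m + 1))))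
    {α : Fin (m + 1) → ℕ} (hα : α ≠ 0) :
    ∃ i, α i ≠ 0 ∧ ∀ f, mderivOn m D α f =
      pderivOn m D i (mderivOn m D (Function.update α i (α i - 1)) f) := by
  obtain ⟨i, hi, h⟩ := exists_foldr_comp_ofFn_iterate_eq (pderivOn m D) α hα
  exact ⟨i, hi, fun f => congrFun h f⟩

lemma sum_update_sub_one_add_one {n : ℕ} (α : Fin n → ℕ) {i : Fin n} (hi : α i ≠ 0) :
    ∑ j, Function.update α i (α i - 1) j + 1 = ∑ j, α j := by
  rw [Finset.sum_update_of_mem (Finset.mem_univ i), Finset.sdiff_singleton_eq_erase,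
    ← Finset.add_sum_erase _ α (Finset.mem_univ i)]
  omega

end MultiIndex

/-- `r + 2 - ⌈r⌉₊` is the least of the exponents `r - |β|` with `|β| + 1 < r`, i.e. of the
Zygmund exponents of the `∂^β f` whose first derivatives are bounded in `abs_mderivOn_le`. -/
noncomputable def derivBoundConst (K : ℝ≥0) (r : ℝ) : ℝ :=
  2 * ((K + 2) ^ r / (2 ^ (r + 2 - ⌈r⌉₊) - 2))

lemma one_lt_add_two_sub_ceil {r : ℝ} (hr : 0 ≤ r) : 1 < r + 2 - ⌈r⌉₊ := by
  linarith [Nat.ceil_lt_add_one hr]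

lemma derivBoundConst_nonneg (K : ℝ≥0) {r : ℝ} (hr : 0 ≤ r) : 0 ≤ derivBoundConst K r := by
  have := two_lt_two_rpow (one_lt_add_two_sub_ceil hr)
  unfold derivBoundConst
  exact mul_nonneg zero_le_two (div_nonneg (by positivity) (by linarith))

lemma mul_rpow_div_le_derivBoundConst (K : ℝ≥0) {r : ℝ} {k : ℕ} (hk : (k : ℝ) + 1 < r)
    {M : ℝ} (hM : 0 ≤ M) :
    2 * (M * (K + 2) ^ (r - k) / (2 ^ (r - k) - 2)) ≤ derivBoundConst K r * M := by
  have hr : 0 ≤ r := by linarith [k.cast_nonneg (α := ℝ)]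
  have hσ₀ := one_lt_add_two_sub_ceil hr
  have hceil : (k : ℝ) + 2 ≤ ⌈r⌉₊ := by exact_mod_cast Nat.lt_ceil.mpr (by exact_mod_cast hk)
  have hden := two_lt_two_rpow hσ₀
  have hmono : (2 : ℝ) ^ (r + 2 - ⌈r⌉₊) ≤ 2 ^ (r - k) :=
    Real.rpow_le_rpow_of_exponent_le one_le_two (by linarith)
  have hnum : ((K : ℝ) + 2) ^ (r - k) ≤ (K + 2) ^ r :=
    Real.rpow_le_rpow_of_exponent_le (by linarith [K.2]) (by linarith [k.cast_nonneg (α := ℝ)])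
  calc 2 * (M * (K + 2) ^ (r - k) / (2 ^ (r - k) - 2))
      = 2 * ((K + 2) ^ (r - k) / (2 ^ (r - k) - 2)) * M := by ring
    _ ≤ derivBoundConst K r * M := by
      unfold derivBoundConst
      gcongr

section Seminorm

variable {m : ℕ} {g : EuclideanSpace ℝ (Fin m) → ℝ} {K : ℝ≥0}

lemma abs_mderivOn_le (hg : LipschitzWith K g) {f : EuclideanSpace ℝ (Fin (m + 1)) → ℝ}
    {M r : ℝ} (hM : 0 ≤ M) (hf : ∀ x ∈ epigraph m g, |f x| ≤ M)
    (hZ : ∀ α : Fin (m + 1) → ℕ, ((∑ i, α i : ℕ) : ℝ) < r →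
      ZygmundOn (epigraph m g) (mderivOn m (epigraph m g) α f) M (r - ((∑ i, α i : ℕ) : ℝ)))
    {α : Fin (m + 1) → ℕ} (hα : ((∑ i, α i : ℕ) : ℝ) < r)
    {y : EuclideanSpace ℝ (Fin (m + 1))} (hy : y ∈ epigraph m g) :
    |mderivOn m (epigraph m g) α f y| ≤ (4 + derivBoundConst K r) ^ (∑ i, α i) * M := by
  obtain ⟨k, hk⟩ : ∃ k, ∑ i, α i = k := ⟨_, rfl⟩
  rw [hk] at hα ⊢
  induction k generalizing α y with
  | zero =>
    obtain rfl : α = 0 := by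
      ext i
      exact Finset.sum_eq_zero_iff.mp hk i (Finset.mem_univ i)
    simpa [mderivOn_zero] using hf y hy
  | succ k ih =>
    have hα0 : α ≠ 0 := by
      rintro rfl
      simp at hk
    obtain ⟨i, hi, hderiv⟩ := exists_mderivOn_eq_pderivOn (epigraph m g) hα0
    have hβ : ∑ j, Function.update α i (α i - 1) j = k := by
      have := sum_update_sub_one_add_one α hi
      omega
    have hkr : (k : ℝ) + 1 < r := by exact_mod_cast hα
    have hZβ := hZ _ (by rw [hβ]; linarith)
    rw [hβ] at hZβ
    have hc := derivBoundConst_nonneg K (by linarith [k.cast_nonneg (α := ℝ)] : 0 ≤ r)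
    have hpow : 1 ≤ (4 + derivBoundConst K r) ^ k := one_le_pow₀ (by linarith)
    rw [hderiv]
    calc |pderivOn m (epigraph m g) i (mderivOn m (epigraph m g) _ f) y|
        ≤ 4 * ((4 + derivBoundConst K r) ^ k * M) +
            2 * (M * (K + 2) ^ (r - k) / (2 ^ (r - k) - 2)) :=
          hZβ.abs_pderivOn_le hg (by linarith) hM (fun z hz => ih hz (by linarith) hβ) hy i
      _ ≤ 4 * ((4 + derivBoundConst K r) ^ k * M) + derivBoundConst K r * M :=
          add_le_add_right (mul_rpow_div_le_derivBoundConst K hkr hM) _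
      _ ≤ (4 + derivBoundConst K r) ^ (k + 1) * M := by
          rw [pow_succ]
          nlinarith [mul_le_mul_of_nonneg_right hpow (mul_nonneg hc hM)]

end Seminorm

theorem stmt1_general (m : ℕ) (L r : ℝ) :
    ∃ C : ℝ, ∀ g : EuclideanSpace ℝ (Fin m) → ℝ, LipschitzWith (Real.toNNReal L) g →
      ∀ (f : EuclideanSpace ℝ (Fin (m + 1)) → ℝ) (M : ℝ),
        (∀ α : Fin (m + 1) → ℕ, ((∑ i, α i : ℕ) : ℝ) < r →
          ContinuousOn (mderivOn m (epigraph m g) α f) (epigraph m g)) →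
        (∀ x ∈ epigraph m g, |f x| ≤ M) →
        (∀ α : Fin (m + 1) → ℕ, ((∑ i, α i : ℕ) : ℝ) < r →
          ∀ x h : EuclideanSpace ℝ (Fin (m + 1)), h ≠ 0 →
            segment ℝ x (x + 2 • h) ⊆ epigraph m g →
            |mderivOn m (epigraph m g) α f (x + 2 • h) + mderivOn m (epigraph m g) α f x -
                2 * mderivOn m (epigraph m g) α f (x + h)| ≤
              M * ‖h‖ ^ (r - ((∑ i, α i : ℕ) : ℝ))) →
        ∀ α : Fin (m + 1) → ℕ, ((∑ i, α i : ℕ) : ℝ) < r →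
          ∀ x ∈ epigraph m g, ∀ h : EuclideanSpace ℝ (Fin (m + 1)), h ≠ 0 →
            x + h ∈ epigraph m g → x - h ∈ epigraph m g →
            |mderivOn m (epigraph m g) α f x| +
              |mderivOn m (epigraph m g) α f (x + h) + mderivOn m (epigraph m g) α f (x - h) -
                  2 * mderivOn m (epigraph m g) α f x| / ‖h‖ ^ (r - ((∑ i, α i : ℕ) : ℝ)) ≤
            C * M := by
  set K := Real.toNNReal L
  refine ⟨(4 + derivBoundConst K r) ^ ⌈r⌉₊ + 5 * (K + 2) ^ r, ?_⟩
  intro g hg f M _ hf hZ α hα x hx h hh hxp hxm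
  have hM : 0 ≤ M := (abs_nonneg _).trans (hf x hx)
  have hr : 0 ≤ r := (Nat.cast_nonneg _).trans hα.le
  have hsup : |mderivOn m (epigraph m g) α f x| ≤ (4 + derivBoundConst K r) ^ ⌈r⌉₊ * M := by
    refine (abs_mderivOn_le hg hM hf hZ hα hx).trans ?_
    have := derivBoundConst_nonneg K hr
    gcongr
    · linarith
    · exact (Nat.lt_ceil.mpr hα).le
  have hcentered := ZygmundOn.abs_centered_second_diff_div_le hg (hZ α hα) (sub_pos.mpr hα)
    (sub_le_self r (Nat.cast_nonneg _)) hM hx hh hxp hxm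
  linarith

/-- Equivalence of Hölder–Zygmund seminorms (Proposition 5.2). -/
theorem stmt1 (m : ℕ) (hm : 1 ≤ m) (L r : ℝ) (hL : 1 ≤ L) (hr : 0 < r) :
    ∃ C : ℝ, ∀ g : EuclideanSpace ℝ (Fin m) → ℝ, LipschitzWith (Real.toNNReal L) g →
      ∀ (f : EuclideanSpace ℝ (Fin (m + 1)) → ℝ) (M : ℝ),
        (∀ α : Fin (m + 1) → ℕ, ((∑ i, α i : ℕ) : ℝ) < r →
          ContinuousOn (mderivOn m (epigraph m g) α f) (epigraph m g)) →
        (∀ x ∈ epigraph m g, |f x| ≤ M) →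
        (∀ α : Fin (m + 1) → ℕ, ((∑ i, α i : ℕ) : ℝ) < r →
          ∀ x h : EuclideanSpace ℝ (Fin (m + 1)), h ≠ 0 →
            segment ℝ x (x + 2 • h) ⊆ epigraph m g →
            |mderivOn m (epigraph m g) α f (x + 2 • h) + mderivOn m (epigraph m g) α f x -
                2 * mderivOn m (epigraph m g) α f (x + h)| ≤
              M * ‖h‖ ^ (r - ((∑ i, α i : ℕ) : ℝ))) →
        ∀ α : Fin (m + 1) → ℕ, ((∑ i, α i : ℕ) : ℝ) < r →
          ∀ x ∈ epigraph m g, ∀ h : EuclideanSpace ℝ (Fin (m + 1)), h ≠ 0 →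
            x + h ∈ epigraph m g → x - h ∈ epigraph m g →
            |mderivOn m (epigraph m g) α f x| +
              |mderivOn m (epigraph m g) α f (x + h) + mderivOn m (epigraph m g) α f (x - h) -
                  2 * mderivOn m (epigraph m g) α f x| / ‖h‖ ^ (r - ((∑ i, α i : ℕ) : ℝ)) ≤
            C * M :=
  stmt1_general m L r
end

section
/- Integral estimate (Lemma 6.2): Let m ≥ 1 be an integer, let β ≥ 0, μ₁ ≥ 0, λ ∈ ℝ and ε > 0, and set β′ = β − λ + 1 + min{0, (λ − μ₁ + 1)/2 − ε}. Then there exists a constant C, depending only on m, β, μ₁, λ and ε, such that for every δ ∈ (0,1) the integral I(δ) = ∫_{[0,1]} ∫_{[0,1]} ∫_{t∈[0,1]^m} s₁^β · (δ + s₁ + s₂ + |t|²)^{−(1+μ₁)} · (δ + s₁ + s₂ + |t|)^{−(m−1+λ−μ₁)} dt ds₂ ds₁ satisfies: I(δ) ≤ C · δ^{β′} if β′ < 0, and I(δ) ≤ C if β′ > 0. -/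
/-!
With `u = δ + s₁ + s₂`, polar coordinates and `y^{m-1} ≤ (u + y)^{m-1}` reduce the `t`-integral to
`∫₀^R (u + y²)^{-(1+μ₁)} (u + y)^{μ₁-λ} dy`. Writing `u = w²`, this integrand is at most a constant
times `w^{-max(λ-μ₁, 0)} (w + y)^{-(2+μ₁+λ)}`, and `∫₀^R (w + y)^{-r} dy ≲ w^{-a}` for every `a ≥ 0`
with `r < a + 1`. So the `t`-integral is `≲ u^{-s}` as soon as `s ≥ max(0, λ + 1)` and
`2s > 1 + μ₁ + λ`, which holds for `s = β + 2 - β'` thanks to the `ε` in `β'`.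

After `s₁^β ≤ (δ + s₁)^β`, the `s₂`- and `s₁`-integrals are one-dimensional integrals of the same
kind. If `s > β + 2` both are sharp, `∫₀^R (w + y)^{-r} dy ≤ w^{1-r}/(r-1)` for `r > 1`, and give
`δ^{β+2-s} = δ^{β'}`; if `s < β + 2`, an intermediate exponent keeps both bounded.
-/

open MeasureTheory

/-- The integral `I(δ)` of Lemma 6.2, over `[0,1] × [0,1] × [0,1]^m`. -/
noncomputable def kernelIntegral (m : ℕ) (β μ₁ lam δ : ℝ) : ℝ :=
  ∫ s₁ in Set.Icc (0 : ℝ) 1, ∫ s₂ in Set.Icc (0 : ℝ) 1,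
    ∫ t in {t : EuclideanSpace ℝ (Fin m) | ∀ i, t i ∈ Set.Icc (0 : ℝ) 1},
      s₁ ^ β * (δ + s₁ + s₂ + ‖t‖ ^ 2) ^ (-(1 + μ₁)) *
        (δ + s₁ + s₂ + ‖t‖) ^ (-((m : ℝ) - 1 + lam - μ₁))

open Set Real Metric

lemma continuousOn_add_sq_rpow_mul_add_rpow {u : ℝ} (hu : 0 < u) (p q : ℝ) :
    ContinuousOn (fun y : ℝ => (u + y ^ 2) ^ p * (u + y) ^ q) (Ici 0) := by
  refine ContinuousOn.mul ?_ ?_ <;> refine ContinuousOn.rpow_const (by fun_prop) fun y hy => ?_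
  · exact Or.inl (by positivity)
  · exact Or.inl (by have : (0 : ℝ) ≤ y := hy; positivity)

lemma continuousOn_add_rpow {w : ℝ} (hw : 0 < w) (q : ℝ) :
    ContinuousOn (fun y : ℝ => (w + y) ^ q) (Ici 0) :=
  ContinuousOn.rpow_const (by fun_prop) fun y (hy : 0 ≤ y) => Or.inl (by positivity)

lemma integrableOn_Ioc_add_rpow {w : ℝ} (hw : 0 < w) (q R : ℝ) :
    IntegrableOn (fun y : ℝ => (w + y) ^ q) (Ioc 0 R) :=
  ((continuousOn_add_rpow hw q).mono Icc_subset_Ici_self).integrableOn_compact isCompact_Icc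
    |>.mono_set Ioc_subset_Icc_self

lemma setIntegral_mono_of_nonneg_on {s : Set ℝ} {f g : ℝ → ℝ} (hs : MeasurableSet s)
    (hf : ∀ x ∈ s, 0 ≤ f x) (hg : IntegrableOn g s) (hfg : ∀ x ∈ s, f x ≤ g x) :
    ∫ x in s, f x ≤ ∫ x in s, g x :=
  integral_mono_of_nonneg (ae_restrict_of_forall_mem hs hf) hg (ae_restrict_of_forall_mem hs hfg)

lemma setIntegral_Ioc_comp_add_left (f : ℝ → ℝ) (w : ℝ) {R : ℝ} (hR : 0 ≤ R) :
    ∫ y in Ioc 0 R, f (w + y) = ∫ x in Ioc w (w + R), f x := by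
  rw [← intervalIntegral.integral_of_le hR, intervalIntegral.integral_comp_add_left,
    add_zero, intervalIntegral.integral_of_le (by linarith)]

lemma integral_Ioc_rpow {q X : ℝ} (hq : -1 < q) (hX : 0 ≤ X) :
    ∫ x in Ioc 0 X, x ^ q = X ^ (q + 1) / (q + 1) := by
  rw [← intervalIntegral.integral_of_le hX, integral_rpow (Or.inl hq),
    zero_rpow (by linarith), sub_zero]

lemma integral_Ioc_add_rpow_neg_le_of_one_lt {w r R : ℝ} (hw : 0 < w) (hr : 1 < r) (hR : 0 ≤ R) :
    ∫ y in Ioc 0 R, (w + y) ^ (-r) ≤ (r - 1)⁻¹ * w ^ (-(r - 1)) := by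
  rw [setIntegral_Ioc_comp_add_left (· ^ (-r)) w hR]
  calc ∫ x in Ioc w (w + R), x ^ (-r)
      ≤ ∫ x in Ioi w, x ^ (-r) :=
        setIntegral_mono_set (integrableOn_Ioi_rpow_of_lt (by linarith) hw)
          (ae_restrict_of_forall_mem measurableSet_Ioi fun x hx =>
            rpow_nonneg (hw.trans hx).le _)
          Ioc_subset_Ioi_self.eventuallyLE
    _ = (r - 1)⁻¹ * w ^ (-(r - 1)) := by
        rw [integral_Ioi_rpow_of_lt (by linarith) hw, show -r + 1 = -(r - 1) by ring, div_neg,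
          neg_div, neg_neg, div_eq_inv_mul]

lemma integral_Ioc_add_rpow_neg_le {w W r a R : ℝ} (hw : 0 < w) (hwW : w ≤ W) (ha : 0 ≤ a)
    (hr : r < a + 1) (hR : 0 ≤ R) :
    ∫ y in Ioc 0 R, (w + y) ^ (-r) ≤ (W + R) ^ (a + 1 - r) / (a + 1 - r) * w ^ (-a) := by
  have hint : IntegrableOn (fun x : ℝ => x ^ (a - r)) (Ioc 0 (W + R)) :=
    (intervalIntegral.intervalIntegrable_rpow' (by linarith)).1
  calc ∫ y in Ioc 0 R, (w + y) ^ (-r)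
      ≤ ∫ y in Ioc 0 R, w ^ (-a) * (w + y) ^ (a - r) := by
        refine setIntegral_mono_of_nonneg_on measurableSet_Ioc
          (fun y hy => rpow_nonneg (by linarith [hy.1]) _) ?_ fun y hy => ?_
        · exact (integrableOn_Ioc_add_rpow hw _ R).const_mul _
        · have hwy : 0 < w + y := by linarith [hy.1]
          rw [show -r = -a + (a - r) by ring, rpow_add hwy]
          exact mul_le_mul_of_nonneg_right (rpow_le_rpow_of_nonpos hw (by linarith [hy.1])
            (by linarith)) (rpow_nonneg hwy.le _)
    _ = w ^ (-a) * ∫ x in Ioc w (w + R), x ^ (a - r) := by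
        rw [integral_const_mul, setIntegral_Ioc_comp_add_left (· ^ (a - r)) w hR]
    _ ≤ w ^ (-a) * ∫ x in Ioc 0 (W + R), x ^ (a - r) := by
        refine mul_le_mul_of_nonneg_left (setIntegral_mono_set hint
          (ae_restrict_of_forall_mem measurableSet_Ioc fun x hx => rpow_nonneg hx.1.le _)
          (Ioc_subset_Ioc hw.le (by linarith)).eventuallyLE) (rpow_nonneg hw.le _)
    _ = (W + R) ^ (a + 1 - r) / (a + 1 - r) * w ^ (-a) := by
        rw [integral_Ioc_rpow (by linarith) (by linarith), mul_comm]
        ring_nf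

lemma rpow_le_of_mul_le_of_nonpos {x z c q : ℝ} (hc : 0 < c) (hz : 0 < z) (hx : c * z ≤ x)
    (hq : q ≤ 0) :
    x ^ q ≤ c ^ q * z ^ q := by
  rw [← mul_rpow hc.le hz.le]
  exact rpow_le_rpow_of_nonpos (by positivity) hx hq

-- From `(w + y)² / 2 ≤ w² + y²` and, for `w ≤ 2`, `w (w + y) / 2 ≤ w² + y ≤ 2 (w + y)`.
lemma sq_add_sq_rpow_neg_mul_rpow_le {w y p e : ℝ} (hw : 0 < w) (hw2 : w ≤ 2) (hy : 0 ≤ y)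
    (hp : 0 ≤ p) :
    (w ^ 2 + y ^ 2) ^ (-p) * (w ^ 2 + y) ^ e ≤
      2 ^ (p + |e|) * w ^ (-max (-e) 0) * (w + y) ^ (-(2 * p - e)) := by
  have hwy : 0 < w + y := by linarith
  have hsq : (w ^ 2 + y ^ 2) ^ (-p) ≤ 2 ^ p * (w + y) ^ (-(2 * p)) := by
    have := rpow_le_of_mul_le_of_nonpos (x := w ^ 2 + y ^ 2) (z := (w + y) ^ 2) (c := 2⁻¹)
      (q := -p) (by norm_num) (by positivity) (by nlinarith [sq_nonneg (w - y)]) (by linarith)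
    rwa [inv_rpow zero_le_two, rpow_neg zero_le_two, inv_inv, ← rpow_two (w + y), ← rpow_mul hwy.le,
      mul_neg] at this
  have hpos : (w ^ 2 + y) ^ max e 0 ≤ 2 ^ max e 0 * (w + y) ^ max e 0 := by
    rw [← mul_rpow zero_le_two hwy.le]
    exact rpow_le_rpow (by positivity) (by nlinarith) (le_max_right _ _)
  have hneg : (w ^ 2 + y) ^ (-max (-e) 0) ≤
      2 ^ max (-e) 0 * (w ^ (-max (-e) 0) * (w + y) ^ (-max (-e) 0)) := by
    have := rpow_le_of_mul_le_of_nonpos (x := w ^ 2 + y) (z := w * (w + y)) (c := 2⁻¹)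
      (q := -max (-e) 0) (by norm_num) (by positivity) (by nlinarith) (by simp)
    rwa [inv_rpow zero_le_two, rpow_neg zero_le_two, inv_inv, mul_rpow hw.le hwy.le] at this
  have hsplit : ∀ x : ℝ, 0 < x → x ^ e = x ^ max e 0 * x ^ (-max (-e) 0) := fun x hx => by
    rw [← rpow_add hx, ← sub_eq_add_neg, max_zero_sub_max_neg_zero_eq_self]
  calc (w ^ 2 + y ^ 2) ^ (-p) * (w ^ 2 + y) ^ e
      ≤ 2 ^ p * (w + y) ^ (-(2 * p)) * ((2 ^ max e 0 * (w + y) ^ max e 0) *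
          (2 ^ max (-e) 0 * (w ^ (-max (-e) 0) * (w + y) ^ (-max (-e) 0)))) := by
        rw [hsplit _ (by positivity)]
        gcongr
    _ = 2 ^ (p + |e|) * w ^ (-max (-e) 0) * (w + y) ^ (-(2 * p - e)) := by
        rw [← max_zero_add_max_neg_zero_eq_abs_self, rpow_add two_pos, rpow_add two_pos,
          show -(2 * p - e) = -(2 * p) + (max e 0 + -max (-e) 0) by
            rw [← sub_eq_add_neg, max_zero_sub_max_neg_zero_eq_self]; ring,
          rpow_add hwy, rpow_add hwy]
        ring

lemma integral_closedBall_fun_norm {E : Type*} [NormedAddCommGroup E] [NormedSpace ℝ E]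
    [FiniteDimensional ℝ E] [MeasurableSpace E] [BorelSpace E] [Nontrivial E] (μ : Measure E)
    [μ.IsAddHaarMeasure] (f : ℝ → ℝ) (R : ℝ) :
    ∫ x in closedBall (0 : E) R, f ‖x‖ ∂μ =
      Module.finrank ℝ E * μ.real (ball 0 1) *
        ∫ y in Ioc 0 R, y ^ (Module.finrank ℝ E - 1) * f y := by
  have hind : (closedBall (0 : E) R).indicator (fun x => f ‖x‖) =
      fun x => (Iic R).indicator f ‖x‖ := by
    ext x
    simp only [indicator, mem_closedBall_zero_iff, mem_Iic]
  rw [← integral_indicator measurableSet_closedBall, hind, integral_fun_norm_addHaar]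
  simp only [nsmul_eq_mul, smul_eq_mul, mul_assoc]
  congr 2
  simp_rw [← indicator_mul_right (Iic R) (fun y : ℝ => y ^ (Module.finrank ℝ E - 1)) f]
  rw [setIntegral_indicator measurableSet_Iic, Ioi_inter_Iic]

def unitCube (m : ℕ) : Set (EuclideanSpace ℝ (Fin m)) := {t | ∀ i, t i ∈ Icc (0 : ℝ) 1}

lemma unitCube_subset_closedBall (m : ℕ) : unitCube m ⊆ closedBall 0 √m := by
  intro t ht
  rw [mem_closedBall_zero_iff, EuclideanSpace.norm_eq]
  refine sqrt_le_sqrt ?_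
  calc ∑ i, ‖t i‖ ^ 2 ≤ ∑ _i : Fin m, (1 : ℝ) := by
        refine Finset.sum_le_sum fun i _ => ?_
        rw [norm_eq_abs, sq_abs]
        nlinarith [(ht i).1, (ht i).2]
    _ = m := by simp

lemma exists_integral_Ioc_sq_rpow_mul_le {p e a R : ℝ} (hp : 0 ≤ p) (ha : 0 ≤ a)
    (hpa : 2 * p - e < a + 1) (hR : 0 ≤ R) :
    ∃ C, 0 ≤ C ∧ ∀ w, 0 < w → w ≤ 2 →
      ∫ y in Ioc 0 R, (w ^ 2 + y ^ 2) ^ (-p) * (w ^ 2 + y) ^ e ≤ C * w ^ (-(a + max (-e) 0)) := by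
  set K := (2 + R) ^ (a + 1 - (2 * p - e)) / (a + 1 - (2 * p - e))
  have hK : 0 ≤ K := div_nonneg (rpow_nonneg (by linarith) _) (by linarith)
  refine ⟨2 ^ (p + |e|) * K, by positivity, fun w hw hw2 => ?_⟩
  calc ∫ y in Ioc 0 R, (w ^ 2 + y ^ 2) ^ (-p) * (w ^ 2 + y) ^ e
      ≤ ∫ y in Ioc 0 R, 2 ^ (p + |e|) * w ^ (-max (-e) 0) * (w + y) ^ (-(2 * p - e)) :=
        setIntegral_mono_of_nonneg_on measurableSet_Ioc
          (fun y hy => by have := hy.1; positivity)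
          ((integrableOn_Ioc_add_rpow hw _ R).const_mul _)
          fun y hy => sq_add_sq_rpow_neg_mul_rpow_le hw hw2 hy.1.le hp
    _ = 2 ^ (p + |e|) * w ^ (-max (-e) 0) * ∫ y in Ioc 0 R, (w + y) ^ (-(2 * p - e)) :=
        integral_const_mul _ _
    _ ≤ 2 ^ (p + |e|) * w ^ (-max (-e) 0) * (K * w ^ (-a)) := by
        gcongr
        exact integral_Ioc_add_rpow_neg_le hw hw2 ha hpa hR
    _ = 2 ^ (p + |e|) * K * w ^ (-(a + max (-e) 0)) := by
        rw [neg_add, rpow_add hw]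
        ring

lemma exists_integral_unitCube_le {m : ℕ} (hm : 1 ≤ m) {μ₁ lam s : ℝ} (hμ₁ : 0 ≤ μ₁) (hs : 0 ≤ s)
    (hs_lam : lam + 1 ≤ s) (hs_sum : 1 + μ₁ + lam < 2 * s) :
    ∃ C, 0 ≤ C ∧ ∀ u, 0 < u → u ≤ 3 →
      ∫ t in unitCube m, (u + ‖t‖ ^ 2) ^ (-(1 + μ₁)) * (u + ‖t‖) ^ (-((m : ℝ) - 1 + lam - μ₁))
        ≤ C * u ^ (-s) := by
  obtain ⟨C, hC0, hC⟩ := exists_integral_Ioc_sq_rpow_mul_le (p := 1 + μ₁) (e := μ₁ - lam)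
    (a := 2 * s - max (lam - μ₁) 0) (R := √m) (by linarith)
    (by rcases max_cases (lam - μ₁) 0 with h | h <;> linarith)
    (by rcases max_cases (lam - μ₁) 0 with h | h <;> linarith) (sqrt_nonneg _)
  have : Nonempty (Fin m) := ⟨⟨0, hm⟩⟩
  set V := (volume : Measure (EuclideanSpace ℝ (Fin m))).real (ball 0 1)
  refine ⟨m * V * C, by positivity, fun u hu hu3 => ?_⟩
  set F := fun y : ℝ => (u + y ^ 2) ^ (-(1 + μ₁)) * (u + y) ^ (-((m : ℝ) - 1 + lam - μ₁))
  have hF0 : ∀ y, 0 ≤ y → 0 ≤ F y := fun y hy => by positivity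
  have hw : 0 < √u := sqrt_pos.2 hu
  have hw2 : √u ≤ 2 := by
    rw [sqrt_le_left (by norm_num)]
    linarith
  calc ∫ t in unitCube m, F ‖t‖
      ≤ ∫ t in closedBall 0 √m, F ‖t‖ :=
        setIntegral_mono_set
          (((continuousOn_add_sq_rpow_mul_add_rpow hu _ _).comp_continuous continuous_norm
            norm_nonneg).continuousOn.integrableOn_compact (isCompact_closedBall _ _))
          (Filter.Eventually.of_forall fun t => hF0 _ (norm_nonneg t))
          (unitCube_subset_closedBall m).eventuallyLE
    _ = m * V * ∫ y in Ioc 0 √m, y ^ (m - 1) * F y := by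
        rw [integral_closedBall_fun_norm, finrank_euclideanSpace, Fintype.card_fin]
    _ ≤ m * V * ∫ y in Ioc 0 √m, (√u ^ 2 + y ^ 2) ^ (-(1 + μ₁)) * (√u ^ 2 + y) ^ (μ₁ - lam) := by
        rw [sq_sqrt hu.le]
        refine mul_le_mul_of_nonneg_left (setIntegral_mono_of_nonneg_on measurableSet_Ioc
          (fun y hy => mul_nonneg (pow_nonneg hy.1.le _) (hF0 y hy.1.le)) ?_ fun y hy => ?_)
          (by positivity)
        · exact ((continuousOn_add_sq_rpow_mul_add_rpow hu _ _).mono Icc_subset_Ici_self)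
            |>.integrableOn_compact isCompact_Icc |>.mono_set Ioc_subset_Icc_self
        · have huy : 0 < u + y := by linarith [hy.1]
          calc y ^ (m - 1) * F y ≤ (u + y) ^ ((m : ℝ) - 1) * F y := by
                rw [show (m : ℝ) - 1 = (m - 1 : ℕ) by rw [Nat.cast_sub hm, Nat.cast_one],
                  rpow_natCast]
                exact mul_le_mul_of_nonneg_right (pow_le_pow_left₀ hy.1.le (by linarith) _)
                  (hF0 y hy.1.le)
            _ = (u + y ^ 2) ^ (-(1 + μ₁)) * (u + y) ^ (μ₁ - lam) := by
                rw [show μ₁ - lam = ((m : ℝ) - 1) + -((m : ℝ) - 1 + lam - μ₁) by ring,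
                  rpow_add huy]
                ring
    _ ≤ m * V * (C * √u ^ (-(2 * s - max (lam - μ₁) 0 + max (-(μ₁ - lam)) 0))) := by
        gcongr
        exact hC _ hw hw2
    _ = m * V * C * u ^ (-s) := by
        rw [neg_sub, sub_add_cancel, sqrt_eq_rpow, ← rpow_mul hu.le]
        ring_nf

lemma rpow_mul_add_rpow_neg_le {v x β τ : ℝ} (hv : 0 < v) (hx : 0 ≤ x) (hβ : 0 ≤ β) :
    x ^ β * (v + x) ^ (-τ) ≤ (v + x) ^ (-(τ - β)) := by
  rw [show -(τ - β) = β + -τ by ring, rpow_add (by linarith)]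
  exact mul_le_mul_of_nonneg_right (rpow_le_rpow hx (by linarith) hβ) (by positivity)

lemma kernelIntegral_le {m : ℕ} {β μ₁ lam s τ CT CB δ : ℝ} (hβ : 0 ≤ β) (hCT0 : 0 ≤ CT)
    (hCB0 : 0 ≤ CB)
    (hCT : ∀ u, 0 < u → u ≤ 3 →
      ∫ t in unitCube m, (u + ‖t‖ ^ 2) ^ (-(1 + μ₁)) * (u + ‖t‖) ^ (-((m : ℝ) - 1 + lam - μ₁))
        ≤ CT * u ^ (-s))
    (hCB : ∀ v, 0 < v → v ≤ 2 → ∫ x in Ioc 0 1, (v + x) ^ (-s) ≤ CB * v ^ (-τ))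
    (hδ : 0 < δ) (hδ1 : δ ≤ 1) :
    kernelIntegral m β μ₁ lam δ ≤ CT * CB * ∫ x in Ioc 0 1, (δ + x) ^ (-(τ - β)) := by
  have hinner : ∀ s₁ ∈ Icc (0 : ℝ) 1, ∀ s₂ ∈ Icc (0 : ℝ) 1,
      ∫ t in unitCube m, s₁ ^ β * (δ + s₁ + s₂ + ‖t‖ ^ 2) ^ (-(1 + μ₁)) *
        (δ + s₁ + s₂ + ‖t‖) ^ (-((m : ℝ) - 1 + lam - μ₁)) ≤ s₁ ^ β * CT * (δ + s₁ + s₂) ^ (-s) := by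
    intro s₁ hs₁ s₂ hs₂
    simp_rw [mul_assoc]
    rw [integral_const_mul]
    exact mul_le_mul_of_nonneg_left (hCT _ (by linarith [hs₁.1, hs₂.1])
      (by linarith [hs₁.2, hs₂.2])) (rpow_nonneg hs₁.1 _)
  have hmiddle : ∀ s₁ ∈ Icc (0 : ℝ) 1,
      ∫ s₂ in Icc (0 : ℝ) 1, ∫ t in unitCube m, s₁ ^ β * (δ + s₁ + s₂ + ‖t‖ ^ 2) ^ (-(1 + μ₁)) *
        (δ + s₁ + s₂ + ‖t‖) ^ (-((m : ℝ) - 1 + lam - μ₁)) ≤ CT * CB * (δ + s₁) ^ (-(τ - β)) := by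
    intro s₁ hs₁
    have hv : 0 < δ + s₁ := by linarith [hs₁.1]
    calc _ ≤ ∫ s₂ in Icc (0 : ℝ) 1, s₁ ^ β * CT * (δ + s₁ + s₂) ^ (-s) :=
          setIntegral_mono_of_nonneg_on measurableSet_Icc
            (fun s₂ hs₂ => integral_nonneg fun t => by have := hs₁.1; have := hs₂.1; positivity)
            (((continuousOn_add_rpow hv _).mono Icc_subset_Ici_self).integrableOn_compact
              isCompact_Icc |>.const_mul _)
            (hinner s₁ hs₁)
      _ = s₁ ^ β * CT * ∫ x in Ioc 0 1, (δ + s₁ + x) ^ (-s) := by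
          rw [integral_const_mul, integral_Icc_eq_integral_Ioc]
      _ ≤ s₁ ^ β * CT * (CB * (δ + s₁) ^ (-τ)) :=
          mul_le_mul_of_nonneg_left (hCB _ hv (by linarith [hs₁.2]))
            (mul_nonneg (rpow_nonneg hs₁.1 _) hCT0)
      _ = CT * CB * (s₁ ^ β * (δ + s₁) ^ (-τ)) := by ring
      _ ≤ CT * CB * (δ + s₁) ^ (-(τ - β)) :=
          mul_le_mul_of_nonneg_left (rpow_mul_add_rpow_neg_le hδ hs₁.1 hβ) (mul_nonneg hCT0 hCB0)
  calc kernelIntegral m β μ₁ lam δ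
      ≤ ∫ s₁ in Icc (0 : ℝ) 1, CT * CB * (δ + s₁) ^ (-(τ - β)) :=
        setIntegral_mono_of_nonneg_on measurableSet_Icc
          (fun s₁ hs₁ => setIntegral_nonneg measurableSet_Icc fun s₂ hs₂ =>
            integral_nonneg fun t => by have := hs₁.1; have := hs₂.1; positivity)
          (((continuousOn_add_rpow hδ _).mono Icc_subset_Ici_self).integrableOn_compact
            isCompact_Icc |>.const_mul _)
          hmiddle
    _ = CT * CB * ∫ x in Ioc 0 1, (δ + x) ^ (-(τ - β)) := by
        rw [integral_const_mul, integral_Icc_eq_integral_Ioc]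

lemma exists_kernelIntegral_le_rpow {m : ℕ} (hm : 1 ≤ m) {β μ₁ lam s : ℝ} (hβ : 0 ≤ β)
    (hμ₁ : 0 ≤ μ₁) (hs_lam : lam + 1 ≤ s) (hs_sum : 1 + μ₁ + lam < 2 * s) (hsβ : β + 2 < s) :
    ∃ C, ∀ δ ∈ Ioo (0 : ℝ) 1, kernelIntegral m β μ₁ lam δ ≤ C * δ ^ (β + 2 - s) := by
  obtain ⟨CT, hCT0, hCT⟩ := exists_integral_unitCube_le hm hμ₁ (by linarith) hs_lam hs_sum
  refine ⟨CT * (s - 1)⁻¹ * (s - β - 2)⁻¹, fun δ hδ => ?_⟩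
  calc kernelIntegral m β μ₁ lam δ
      ≤ CT * (s - 1)⁻¹ * ∫ x in Ioc 0 1, (δ + x) ^ (-((s - 1) - β)) :=
        kernelIntegral_le hβ hCT0 (inv_nonneg.2 (by linarith)) hCT
          (fun v hv _ => integral_Ioc_add_rpow_neg_le_of_one_lt hv (by linarith) zero_le_one)
          hδ.1 hδ.2.le
    _ ≤ CT * (s - 1)⁻¹ * ((s - 1 - β - 1)⁻¹ * δ ^ (-(s - 1 - β - 1))) :=
        mul_le_mul_of_nonneg_left
          (integral_Ioc_add_rpow_neg_le_of_one_lt hδ.1 (by linarith) zero_le_one)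
          (mul_nonneg hCT0 (inv_nonneg.2 (by linarith)))
    _ = CT * (s - 1)⁻¹ * (s - β - 2)⁻¹ * δ ^ (β + 2 - s) := by
        ring_nf

lemma exists_kernelIntegral_le_const {m : ℕ} (hm : 1 ≤ m) {β μ₁ lam s : ℝ} (hβ : 0 ≤ β)
    (hμ₁ : 0 ≤ μ₁) (hs : 0 ≤ s) (hs_lam : lam + 1 ≤ s) (hs_sum : 1 + μ₁ + lam < 2 * s)
    (hsβ : s < β + 2) :
    ∃ C, ∀ δ ∈ Ioo (0 : ℝ) 1, kernelIntegral m β μ₁ lam δ ≤ C := by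
  obtain ⟨CT, hCT0, hCT⟩ := exists_integral_unitCube_le hm hμ₁ hs hs_lam hs_sum
  -- any `τ` with `s - 1 < τ < β + 1` makes both one-dimensional integrals converge
  set τ := (s + β) / 2 with hτ
  have hτs : s < τ + 1 := by linarith
  have hτβ : τ - β < 1 := by linarith
  set CB := (2 + 1) ^ (τ + 1 - s) / (τ + 1 - s)
  set K := (1 + 1) ^ (0 + 1 - (τ - β)) / (0 + 1 - (τ - β))
  refine ⟨CT * CB * K, fun δ hδ => ?_⟩
  calc kernelIntegral m β μ₁ lam δ
      ≤ CT * CB * ∫ x in Ioc 0 1, (δ + x) ^ (-(τ - β)) :=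
        kernelIntegral_le hβ hCT0 (div_nonneg (by positivity) (by linarith)) hCT
          (fun v hv hv2 => integral_Ioc_add_rpow_neg_le hv hv2 (by positivity) hτs zero_le_one)
          hδ.1 hδ.2.le
    _ ≤ CT * CB * (K * δ ^ (-0 : ℝ)) :=
        mul_le_mul_of_nonneg_left
          (integral_Ioc_add_rpow_neg_le hδ.1 hδ.2.le le_rfl (by linarith) zero_le_one)
          (mul_nonneg hCT0 (div_nonneg (by positivity) (by linarith)))
    _ = CT * CB * K := by
        rw [neg_zero, rpow_zero, mul_one]

/-- Integral estimate (Lemma 6.2). -/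
theorem stmt2 (m : ℕ) (hm : 1 ≤ m) (β μ₁ lam ε : ℝ) (hβ : 0 ≤ β) (hμ₁ : 0 ≤ μ₁)
    (hε : 0 < ε) (β' : ℝ) (hβ' : β' = β - lam + 1 + min 0 ((lam - μ₁ + 1) / 2 - ε)) :
    ∃ C : ℝ, ∀ δ ∈ Set.Ioo (0 : ℝ) 1,
      (β' < 0 → kernelIntegral m β μ₁ lam δ ≤ C * δ ^ β') ∧
      (0 < β' → kernelIntegral m β μ₁ lam δ ≤ C) := by
  have hs_lam : lam + 1 ≤ β + 2 - β' := by
    linarith [min_le_left 0 ((lam - μ₁ + 1) / 2 - ε)]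
  have hs_sum : 1 + μ₁ + lam < 2 * (β + 2 - β') := by
    linarith [min_le_right 0 ((lam - μ₁ + 1) / 2 - ε)]
  rcases lt_trichotomy β' 0 with hneg | rfl | hpos
  · obtain ⟨C, hC⟩ := exists_kernelIntegral_le_rpow hm hβ hμ₁ hs_lam hs_sum (by linarith)
    refine ⟨C, fun δ hδ => ⟨fun _ => ?_, fun h => absurd h hneg.not_gt⟩⟩
    simpa using hC δ hδ
  · exact ⟨0, fun δ _ => ⟨fun h => absurd h (lt_irrefl 0), fun h => absurd h (lt_irrefl 0)⟩⟩
  · obtain ⟨C, hC⟩ := exists_kernelIntegral_le_const hm hβ hμ₁ (le_max_right (β + 2 - β') 0)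
      (hs_lam.trans (le_max_left _ _)) (hs_sum.trans_le (by gcongr; exact le_max_left _ _))
      (max_lt (by linarith) (by linarith))
    exact ⟨C, fun δ hδ => ⟨fun h => absurd h hpos.not_gt, fun _ => hC δ hδ⟩⟩
end

section
/- Localization of ∂D¹ ∩ D³ in the concave configuration (first assertion of (4.13) in Lemma 4.2(c)): Let n ≥ 1, 1 ≤ q ≤ n − 2, r₃ > 0, let λ_j ∈ [−1,1] for q+3 ≤ j ≤ n, and let R : ℂⁿ → ℝ satisfy |R(z)| ≤ |z|²/4 for every z ∈ ℂⁿ. Define ρ¹(z) = −Im z_{q+2} − Σ_{j=1}^{q+2} |z_j|² + Σ_{j=q+3}^{n} λ_j |z_j|² + R(z) and ρ³(z) = −Im z_{q+2} + 3 Σ_{j=q+3}^{n} |z_j|² − r₃². Then every z ∈ ℂⁿ with ρ¹(z) = 0 and ρ³(z) < 0 satisfies |z| < 2 r₃. -/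
/-!
On `∂D¹` the coordinate `Im z_{q+2}` is determined by `ρ¹ = 0`; substituting it into `ρ³ < 0`
and using `λ_j ≤ 1` and `R(z) ≤ |z|²/4` gives `(3/4)|z|² < r₃²`, so `|z|² < 4 r₃²`.
-/

open Complex

theorem EuclideanSpace.norm_sq_eq_sum_ite_add_sum_ite_not {𝕜 ι : Type*} [RCLike 𝕜] [Fintype ι]
    (p : ι → Prop) [DecidablePred p] (z : EuclideanSpace 𝕜 ι) :
    ‖z‖ ^ 2 = ∑ j, (if ¬p j then ‖z j‖ ^ 2 else 0) + ∑ j, (if p j then ‖z j‖ ^ 2 else 0) := by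
  rw [EuclideanSpace.norm_sq_eq, ← Finset.sum_add_distrib]
  refine Finset.sum_congr rfl fun j _ => ?_
  split_ifs <;> simp_all

theorem Finset.sum_ite_mul_le_sum_ite {ι : Type*} (s : Finset ι) (p : ι → Prop) [DecidablePred p]
    {lam a : ι → ℝ} (hlam : ∀ j, p j → lam j ≤ 1) (ha : ∀ j, 0 ≤ a j) :
    ∑ j ∈ s, (if p j then lam j * a j else 0) ≤ ∑ j ∈ s, (if p j then a j else 0) := by
  refine Finset.sum_le_sum fun j _ => ?_
  split_ifs with hj
  · exact mul_le_of_le_one_left (ha j) (hlam j hj)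
  · rfl

theorem norm_sq_lt_of_concave_configuration {A B L R y r : ℝ} (hB : 0 ≤ B) (hL : L ≤ B)
    (hR : R ≤ (A + B) / 4) (hρ₁ : -y - A + L + R = 0) (hρ₃ : -y + 3 * B - r ^ 2 < 0) :
    A + B < 4 / 3 * r ^ 2 := by
  linarith

/-- Coordinates are 0-indexed: `z_{q+2}` is `z ⟨q + 1, _⟩`, the range `1 ≤ j ≤ q+2` is
`(j : ℕ) < q + 2` and the range `q+3 ≤ j ≤ n` is `q + 2 ≤ (j : ℕ)`. -/
theorem stmt7 (n q : ℕ) (hq1 : 1 ≤ q) (hqn : q ≤ n - 2) (r₃ : ℝ) (hr₃ : 0 < r₃)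
    (lam : Fin n → ℝ) (hlam : ∀ j : Fin n, q + 2 ≤ (j : ℕ) → |lam j| ≤ 1)
    (R : EuclideanSpace ℂ (Fin n) → ℝ) (hR : ∀ z, |R z| ≤ ‖z‖ ^ 2 / 4)
    (ρ₁ ρ₃ : EuclideanSpace ℂ (Fin n) → ℝ)
    (hρ₁ : ∀ z, ρ₁ z = -(z ⟨q + 1, by omega⟩).im -
        ∑ j : Fin n, (if (j : ℕ) < q + 2 then ‖z j‖ ^ 2 else 0) +
        ∑ j : Fin n, (if q + 2 ≤ (j : ℕ) then lam j * ‖z j‖ ^ 2 else 0) + R z)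
    (hρ₃ : ∀ z, ρ₃ z = -(z ⟨q + 1, by omega⟩).im +
        3 * ∑ j : Fin n, (if q + 2 ≤ (j : ℕ) then ‖z j‖ ^ 2 else 0) - r₃ ^ 2) :
    ∀ z : EuclideanSpace ℂ (Fin n), ρ₁ z = 0 → ρ₃ z < 0 → ‖z‖ < 2 * r₃ := by
  intro z hz₁ hz₃
  have hsplit :=
    EuclideanSpace.norm_sq_eq_sum_ite_add_sum_ite_not (fun j : Fin n => q + 2 ≤ (j : ℕ)) z
  simp only [not_le] at hsplit
  have hL := Finset.univ.sum_ite_mul_le_sum_ite (fun j : Fin n => q + 2 ≤ (j : ℕ))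
    (fun j hj => (le_abs_self _).trans (hlam j hj)) (fun j => sq_nonneg ‖z j‖)
  have hB : 0 ≤ ∑ j : Fin n, (if q + 2 ≤ (j : ℕ) then ‖z j‖ ^ 2 else 0) :=
    Finset.sum_nonneg fun j _ => by positivity
  have hnorm_sq := norm_sq_lt_of_concave_configuration hB hL
    (hsplit ▸ (le_abs_self _).trans (hR z)) (hρ₁ z ▸ hz₁) (hρ₃ z ▸ hz₃)
  rw [← hsplit] at hnorm_sq
  refine lt_of_pow_lt_pow_left₀ 2 (by positivity) ?_
  nlinarith
end

section
/- Nonemptiness of the parameter interval (9.26) in the Nash–Moser iteration: Let s and r be real numbers with s ≥ 2 and r > s + 5/2, and set r_* = r − 1 + min(0, 7/2 − s). Then r_* > 0 and 1 + 1/r_* < s(r−1)/(r + 5/2 − s). Consequently there exists a real number d with 1 + 1/r_* < d < s(r−1)/(r + 5/2 − s). -/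
/-!
Since `r - 1 + (7/2 - s) = r + 5/2 - s`, the exponent `r_*` is `min (r - 1) (r + 5/2 - s)`, so
`1 + 1/r_*` is the larger of `1 + 1/(r - 1)` and `1 + 1/(r + 5/2 - s)`, and it suffices to put each
below `d_* = s (r - 1)/(r + 5/2 - s)`. After clearing denominators the first bound reads
`r (r + 5/2 - s) < s (r - 1)^2`, which at `s = 2` is `(r - 4)(r - 1/2) > 0` and only improves as `s`
grows; the second reads `7/2 < (s - 1) r`.
-/

section NashMoserExponents

variable {s r : ℝ}

lemma sub_one_add_min_eq_min (s r : ℝ) :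
    r - 1 + min 0 (7 / 2 - s) = min (r - 1) (r + 5 / 2 - s) := by
  rw [← min_add_add_left]
  congr 1 <;> ring

lemma one_add_one_div_sub_one_lt (hs : 2 ≤ s) (hr : s + 5 / 2 < r) :
    1 + 1 / (r - 1) < s * (r - 1) / (r + 5 / 2 - s) := by
  rw [one_add_div (by linarith), div_lt_div_iff₀ (by linarith) (by linarith)]
  nlinarith [mul_nonneg (sub_nonneg.2 hs) (by nlinarith : (0 : ℝ) ≤ (r - 1) ^ 2 + r),
    mul_pos (by linarith : (0 : ℝ) < r - 4) (by linarith : (0 : ℝ) < r - 1 / 2)]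

lemma one_add_one_div_add_sub_lt (hs : 2 ≤ s) (hr : s + 5 / 2 < r) :
    1 + 1 / (r + 5 / 2 - s) < s * (r - 1) / (r + 5 / 2 - s) := by
  have hA : 0 < r + 5 / 2 - s := by linarith
  rw [one_add_div hA.ne', div_lt_div_iff_of_pos_right hA]
  nlinarith [mul_nonneg (sub_nonneg.2 hs) (by linarith : (0 : ℝ) ≤ r)]

end NashMoserExponents

/-- Nonemptiness of the parameter interval (9.26) in the Nash–Moser iteration,
with `r_* = r − 1 + min 0 (7/2 − s)`. -/
theorem stmt13 (s r : ℝ) (hs : 2 ≤ s) (hr : s + 5 / 2 < r) :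
    0 < r - 1 + min 0 (7 / 2 - s) ∧
    1 + 1 / (r - 1 + min 0 (7 / 2 - s)) < s * (r - 1) / (r + 5 / 2 - s) ∧
    ∃ d : ℝ, 1 + 1 / (r - 1 + min 0 (7 / 2 - s)) < d ∧ d < s * (r - 1) / (r + 5 / 2 - s) := by
  rw [sub_one_add_min_eq_min]
  have hpos : 0 < min (r - 1) (r + 5 / 2 - s) := lt_min (by linarith) (by linarith)
  have hlt : 1 + 1 / min (r - 1) (r + 5 / 2 - s) < s * (r - 1) / (r + 5 / 2 - s) := by
    rcases min_choice (r - 1) (r + 5 / 2 - s) with h | h <;> rw [h]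
    · exact one_add_one_div_sub_one_lt hs hr
    · exact one_add_one_div_add_sub_lt hs hr
  exact ⟨hpos, hlt, exists_between hlt⟩
end
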